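/- arXiv:1303.0070 — 8 statements merged into one kernel-verified Lean document; each statement's English description precedes it below -/
import Mathlib

section
/- Let C be a k-dimensional subspace of F^n satisfying A_i(C) < n · q^{-(n-k)} · binom(n,i)(q-1)^i for all 1 ≤ i ≤ n, and let S ⊆ F^n with 0 ∈ S and |S| < q^{n-k}/(2n). Then there exist a monomial map f of F^n and a subset B ⊆ S such that: (1) 0 ∈ B; (2) |B| > |S|·(1 − 2n·q^{-(n-k)}·|S|); (3) the sets {c + f(B) : c ∈ C} are pairwise disjoint. -/
/-- A monomial map of `F^n`, determined by a permutation `σ` of the coordinates and a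
vector `v` of (intended to be nonzero) scaling factors:
`x ↦ (v_1·x_{σ⁻¹(1)}, …, v_n·x_{σ⁻¹(n)})`. -/
def monomialMap {F : Type*} [Mul F] {n : ℕ} (σ : Equiv.Perm (Fin n)) (v : Fin n → F)
    (x : Fin n → F) : Fin n → F :=
  fun i => v i * x (σ.symm i)

/-!
Average over the `n! (q-1)^n` pairs `ω = (σ, v)` of a permutation and a vector of units. A monomial
map preserves weight, and at most `w! (n-w)! (q-1)^(n-w)` of them send a vector `d` of weight `w`
to a given vector of weight `w`, so a nonzero `d` is sent into `C` by a fraction at most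
`A_w(C) / (binom(n,w) (q-1)^w) < n / q^(n-k)` of them. Hence some `ω` sends at most
`n |S|² / q^(n-k)` of the differences `s - t` of distinct elements of `S` into `C`. Discarding the
first element of each such pair, but keeping `0`, leaves a set `B` no two distinct elements of which
have `ω`-difference in `C`, and that is the disjointness of the translates `c + ω(B)`.
-/

open Finset
open scoped Nat

section Translates

variable {G S' : Type*} [AddCommGroup G] [SetLike S' G] [AddSubgroupClass S' G]

theorem pairwise_disjoint_image_add_of_sub_mem {C : S'} {A : Set G}
    (hA : ∀ a₁ ∈ A, ∀ a₂ ∈ A, a₁ - a₂ ∈ C → a₁ = a₂) :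
    (C : Set G).Pairwise fun c₁ c₂ =>
      Disjoint ((fun a => c₁ + a) '' A) ((fun a => c₂ + a) '' A) := by
  intro c₁ hc₁ c₂ hc₂ hne
  rw [Set.disjoint_left]
  rintro _ ⟨a₁, ha₁, rfl⟩ ⟨a₂, ha₂, h⟩
  have hsub : a₂ - a₁ = c₁ - c₂ := by rw [sub_eq_sub_iff_add_eq_add, add_comm]; exact h
  obtain rfl := hA a₂ ha₂ a₁ ha₁ (hsub ▸ sub_mem hc₁ hc₂)
  exact hne (add_right_cancel h).symm

theorem exists_subset_card_le_add_pairwise_disjoint [DecidableEq G] (C : S')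
    [DecidablePred (· ∈ C)] {f : G → G} (hf : ∀ a b, f (a - b) = f a - f b) (S : Finset G)
    (h0 : 0 ∈ S) :
    ∃ B ⊆ S, 0 ∈ B ∧ #S ≤ #B + #{p ∈ S.offDiag | f (p.1 - p.2) ∈ C} ∧
      (C : Set G).Pairwise fun c₁ c₂ =>
        Disjoint ((fun b => c₁ + b) '' (f '' B)) ((fun b => c₂ + b) '' (f '' B)) := by
  set P := {p ∈ S.offDiag | f (p.1 - p.2) ∈ C}
  set B := insert 0 (S \ P.image Prod.fst)
  have hB : B ⊆ S := insert_subset h0 sdiff_subset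
  refine ⟨B, hB, mem_insert_self _ _, ?_, pairwise_disjoint_image_add_of_sub_mem ?_⟩
  · calc #S ≤ #(S \ P.image Prod.fst) + #(P.image Prod.fst) := card_le_card_sdiff_add_card
      _ ≤ #B + #P := add_le_add (card_le_card (subset_insert _ _)) card_image_le
  rintro _ ⟨b₁, hb₁, rfl⟩ _ ⟨b₂, hb₂, rfl⟩ hC
  by_contra hne
  have hbad : ∀ {x y}, x ∈ B → y ∈ B → x ≠ y → f (x - y) ∈ C → x = 0 := by
    intro x y hx hy hxy hxyC
    refine (mem_insert.1 hx).resolve_right fun hx' => (mem_sdiff.1 hx').2 ?_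
    exact mem_image.2 ⟨(x, y), mem_filter.2 ⟨mem_offDiag.2 ⟨hB hx, hB hy, hxy⟩, hxyC⟩, rfl⟩
  have hb : b₁ ≠ b₂ := fun h => hne (h ▸ rfl)
  have h₁ := hbad hb₁ hb₂ hb (hf b₁ b₂ ▸ hC)
  have h₂ := hbad hb₂ hb₁ hb.symm (by rw [hf, ← neg_sub]; exact neg_mem hC)
  exact hb (h₁.trans h₂.symm)

end Translates

theorem Finset.exists_card_filter_le_of_forall_card_filter_le {W X : Type*} [Fintype W]
    [Nonempty W] (s : Finset X) (r : W → X → Prop) [∀ ω x, Decidable (r ω x)] (M : ℝ)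
    (hM : ∀ x ∈ s, (#{ω | r ω x} : ℝ) ≤ M * Fintype.card W) :
    ∃ ω, (#{x ∈ s | r ω x} : ℝ) ≤ #s * M := by
  have hsum : ∑ ω : W, (#{x ∈ s | r ω x} : ℝ) ≤ ∑ _ω : W, #s * M := by
    have hcount := sum_card_bipartiteAbove_eq_sum_card_bipartiteBelow r (s := univ) (t := s)
    simp only [bipartiteAbove, bipartiteBelow] at hcount
    calc ∑ ω : W, (#{x ∈ s | r ω x} : ℝ) = ∑ x ∈ s, (#{ω | r ω x} : ℝ) := by exact_mod_cast hcount
      _ ≤ ∑ _x ∈ s, M * Fintype.card W := sum_le_sum hM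
      _ = ∑ _ω : W, #s * M := by simp only [sum_const, card_univ, nsmul_eq_mul]; ring
  obtain ⟨ω, -, hω⟩ := exists_le_of_sum_le univ_nonempty hsum
  exact ⟨ω, hω⟩

theorem Nat.choose_mul_factorial_mul_pow {n w : ℕ} (hw : w ≤ n) (a : ℕ) :
    n.choose w * a ^ w * (w ! * (n - w)! * a ^ (n - w)) = n ! * a ^ n := by
  calc _ = n.choose w * w ! * (n - w)! * (a ^ w * a ^ (n - w)) := by ring
    _ = _ := by rw [Nat.choose_mul_factorial_mul_factorial hw, ← pow_add, Nat.add_sub_cancel' hw]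

section Monomial

variable {F : Type*} {n : ℕ}

theorem monomialMap_sub [NonUnitalNonAssocRing F] (σ : Equiv.Perm (Fin n)) (v x y : Fin n → F) :
    monomialMap σ v (x - y) = monomialMap σ v x - monomialMap σ v y := by
  funext i
  simp [monomialMap, mul_sub]

variable [GroupWithZero F]

def unitMonomialMap (ω : Equiv.Perm (Fin n) × (Fin n → Fˣ)) : (Fin n → F) → Fin n → F :=
  monomialMap ω.1 fun i => ω.2 i

theorem unitMonomialMap_apply_ne_zero_iff (ω : Equiv.Perm (Fin n) × (Fin n → Fˣ))
    (x : Fin n → F) (i : Fin n) : unitMonomialMap ω x i ≠ 0 ↔ x (ω.1.symm i) ≠ 0 := by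
  simp [unitMonomialMap, monomialMap]

theorem unitMonomialMap_apply_ne_zero_iff_of_eq {ω : Equiv.Perm (Fin n) × (Fin n → Fˣ)}
    {d c : Fin n → F} (h : unitMonomialMap ω d = c) (j : Fin n) : d j ≠ 0 ↔ c (ω.1 j) ≠ 0 := by
  simp [← h, unitMonomialMap_apply_ne_zero_iff]

theorem eq_of_unitMonomialMap_eq {ω₁ ω₂ : Equiv.Perm (Fin n) × (Fin n → Fˣ)} {d c : Fin n → F}
    (h₁ : unitMonomialMap ω₁ d = c) (h₂ : unitMonomialMap ω₂ d = c) (hσ : ω₁.1 = ω₂.1)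
    (hv : ∀ i, c i = 0 → ω₁.2 i = ω₂.2 i) : ω₁ = ω₂ := by
  refine Prod.ext hσ (funext fun i => ?_)
  by_cases hi : c i = 0
  · exact hv i hi
  have hdi : d (ω₁.1.symm i) ≠ 0 :=
    (unitMonomialMap_apply_ne_zero_iff_of_eq h₁ _).2 (by simpa using hi)
  have e₁ := congrFun h₁ i
  have e₂ := congrFun h₂ i
  simp only [unitMonomialMap, monomialMap, ← hσ] at e₁ e₂
  exact Units.ext (mul_right_cancel₀ hdi (e₁.trans e₂.symm))

variable [DecidableEq F]

theorem hammingNorm_unitMonomialMap (ω : Equiv.Perm (Fin n) × (Fin n → Fˣ)) (x : Fin n → F) :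
    hammingNorm (unitMonomialMap ω x) = hammingNorm x :=
  card_equiv ω.1.symm fun i => by simp [unitMonomialMap_apply_ne_zero_iff]

variable [Fintype F]

theorem card_perm_prod_units :
    Fintype.card (Equiv.Perm (Fin n) × (Fin n → Fˣ)) = n ! * (Fintype.card F - 1) ^ n := by
  simp [Fintype.card_perm, Fintype.card_units]

/-- An element of the fibre is determined by where `σ` sends the support of `d` and its
complement, and by `v` off the support of `c`. -/
theorem card_filter_unitMonomialMap_eq_le {d c : Fin n → F} {w : ℕ} (hd : hammingNorm d = w)
    (hc : hammingNorm c = w) :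
    #{ω | unitMonomialMap ω d = c} ≤ w ! * (n - w)! * (Fintype.card F - 1) ^ (n - w) := by
  have hcard : ∀ x : Fin n → F, Fintype.card {i // x i ≠ 0} = hammingNorm x := fun x =>
    Fintype.card_subtype _
  have hcard' : ∀ x : Fin n → F, Fintype.card {i // ¬x i ≠ 0} = n - hammingNorm x := fun x => by
    rw [Fintype.card_subtype_compl, hcard, Fintype.card_fin]
  rw [← Fintype.card_subtype]
  calc _ ≤ Fintype.card (({j // d j ≠ 0} ↪ {i // c i ≠ 0}) ×
          ({j // ¬d j ≠ 0} ↪ {i // ¬c i ≠ 0}) × ({i // ¬c i ≠ 0} → Fˣ)) := by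
        refine Fintype.card_le_of_injective (fun ω =>
          (ω.1.1.toEmbedding.subtypeMap fun j =>
              (unitMonomialMap_apply_ne_zero_iff_of_eq ω.2 j).1,
            ω.1.1.toEmbedding.subtypeMap fun j =>
              mt (unitMonomialMap_apply_ne_zero_iff_of_eq ω.2 j).2,
            fun i => ω.1.2 i)) ?_
        rintro ⟨ω₁, h₁⟩ ⟨ω₂, h₂⟩ h
        simp only [Prod.mk.injEq] at h
        obtain ⟨hs, hz, hv⟩ := h
        refine Subtype.ext (eq_of_unitMonomialMap_eq h₁ h₂ (Equiv.ext fun j => ?_)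
          fun i hi => congrFun hv ⟨i, not_not_intro hi⟩)
        by_cases hj : d j ≠ 0
        · exact congrArg Subtype.val (DFunLike.congr_fun hs ⟨j, hj⟩)
        · exact congrArg Subtype.val (DFunLike.congr_fun hz ⟨j, hj⟩)
    _ = _ := by
        simp only [Fintype.card_prod, Fintype.card_fun, Fintype.card_embedding_eq, hcard, hcard',
          hd, hc, Nat.descFactorial_self, Fintype.card_units, mul_assoc]

theorem card_filter_unitMonomialMap_mem_le {S' : Type*} [SetLike S' (Fin n → F)] (C : S')
    [DecidablePred (· ∈ C)] {M : ℝ}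
    (hC : ∀ i, 1 ≤ i → i ≤ n →
      (#{x | x ∈ C ∧ hammingNorm x = i} : ℝ) ≤ M * (n.choose i * (Fintype.card F - 1) ^ i : ℕ))
    {d : Fin n → F} (hd : d ≠ 0) :
    (#{ω | unitMonomialMap ω d ∈ C} : ℝ) ≤
      M * Fintype.card (Equiv.Perm (Fin n) × (Fin n → Fˣ)) := by
  set w := hammingNorm d
  have hw : w ≤ n := by simpa using hammingNorm_le_card_fintype (x := d)
  set stab := w ! * (n - w)! * (Fintype.card F - 1) ^ (n - w)
  have hfibres : #{ω | unitMonomialMap ω d ∈ C} ≤ stab * #{x | x ∈ C ∧ hammingNorm x = w} := by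
    refine card_le_mul_card_image_of_maps_to (f := fun ω => unitMonomialMap ω d) ?_ _ ?_
    · intro ω hω
      simp only [mem_filter, mem_univ, true_and] at hω ⊢
      exact ⟨hω, hammingNorm_unitMonomialMap ω d⟩
    · intro c hc
      refine (card_le_card fun ω => ?_).trans
        (card_filter_unitMonomialMap_eq_le rfl (mem_filter.1 hc).2.2)
      simp +contextual
  calc (#{ω | unitMonomialMap ω d ∈ C} : ℝ)
      ≤ stab * #{x | x ∈ C ∧ hammingNorm x = w} := by exact_mod_cast hfibres
    _ ≤ stab * (M * (n.choose w * (Fintype.card F - 1) ^ w : ℕ)) := by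
      gcongr
      exact hC w (Nat.one_le_iff_ne_zero.2 (hammingNorm_ne_zero_iff.2 hd)) hw
    _ = M * Fintype.card (Equiv.Perm (Fin n) × (Fin n → Fˣ)) := by
      rw [card_perm_prod_units, ← Nat.choose_mul_factorial_mul_pow hw]
      push_cast [stab]
      ring

end Monomial

theorem exists_unitMonomialMap_packing {F S' : Type*} [DivisionRing F] [Fintype F]
    [DecidableEq F] {n : ℕ} [SetLike S' (Fin n → F)] [AddSubgroupClass S' (Fin n → F)] (C : S')
    [DecidablePred (· ∈ C)] {M : ℝ} (hM : 0 ≤ M)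
    (hC : ∀ i, 1 ≤ i → i ≤ n →
      (#{x | x ∈ C ∧ hammingNorm x = i} : ℝ) ≤ M * (n.choose i * (Fintype.card F - 1) ^ i : ℕ))
    (S : Finset (Fin n → F)) (h0 : 0 ∈ S) :
    ∃ ω : Equiv.Perm (Fin n) × (Fin n → Fˣ), ∃ B ⊆ S, 0 ∈ B ∧ (#S : ℝ) - #S ^ 2 * M ≤ #B ∧
      (C : Set (Fin n → F)).Pairwise fun c₁ c₂ =>
        Disjoint ((fun b => c₁ + b) '' (unitMonomialMap ω '' B))
          ((fun b => c₂ + b) '' (unitMonomialMap ω '' B)) := by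
  obtain ⟨ω, hω⟩ := S.offDiag.exists_card_filter_le_of_forall_card_filter_le
    (fun ω p => unitMonomialMap ω (p.1 - p.2) ∈ C) M fun _p hp =>
      card_filter_unitMonomialMap_mem_le C hC (sub_ne_zero.2 (mem_offDiag.1 hp).2.2)
  obtain ⟨B, hBS, hB0, hB, hdisj⟩ := exists_subset_card_le_add_pairwise_disjoint C
    (monomialMap_sub ω.1 fun i => (ω.2 i : F)) S h0
  refine ⟨ω, B, hBS, hB0, ?_, hdisj⟩
  have hoff : (#S.offDiag : ℝ) ≤ #S ^ 2 := by
    rw [offDiag_card, sq]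
    exact_mod_cast Nat.sub_le _ _
  calc (#S : ℝ) - #S ^ 2 * M ≤ #S - #S.offDiag * M := by gcongr
    _ ≤ #S - #{p ∈ S.offDiag | unitMonomialMap ω (p.1 - p.2) ∈ C} := by linarith
    _ ≤ #B := by
      rw [sub_le_iff_le_add]
      exact_mod_cast hB

theorem universal_packing_of_white_code_general
    (F : Type*) [Field F] [Fintype F] [DecidableEq F] (q n k : ℕ)
    (hq : Fintype.card F = q) (hk : 1 ≤ k) (hkn : k ≤ n)
    (C : Submodule F (Fin n → F))
    (hwd : ∀ i : ℕ, 1 ≤ i → i ≤ n →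
      (({x : Fin n → F | x ∈ C ∧ hammingNorm x = i}.ncard : ℝ)) <
        (n : ℝ) * ((n.choose i * (q - 1) ^ i : ℕ) : ℝ) / (q : ℝ) ^ (n - k))
    (S : Set (Fin n → F)) (h0S : (0 : Fin n → F) ∈ S) :
    ∃ (σ : Equiv.Perm (Fin n)) (v : Fin n → F), (∀ i, v i ≠ 0) ∧
      ∃ B ⊆ S, (0 : Fin n → F) ∈ B ∧
        (B.ncard : ℝ) > (S.ncard : ℝ) * (1 - 2 * n * (S.ncard : ℝ) / (q : ℝ) ^ (n - k)) ∧
        (C : Set (Fin n → F)).Pairwise (fun c₁ c₂ =>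
          Disjoint ((fun b => c₁ + b) '' (monomialMap σ v '' B))
            ((fun b => c₂ + b) '' (monomialMap σ v '' B))) := by
  classical
  subst hq
  set Q : ℝ := (Fintype.card F : ℝ) ^ (n - k)
  have hweights : ∀ i, 1 ≤ i → i ≤ n →
      (#{x | x ∈ C ∧ hammingNorm x = i} : ℝ) ≤
        n / Q * (n.choose i * (Fintype.card F - 1) ^ i : ℕ) := fun i h₁ h₂ => by
    rw [div_mul_eq_mul_div, ← Set.ncard_coe_finset, coe_filter_univ]
    exact (hwd i h₁ h₂).le
  obtain ⟨ω, B, hBS, hB0, hB, hdisj⟩ :=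
    exists_unitMonomialMap_packing C (by positivity) hweights S.toFinset (Set.mem_toFinset.2 h0S)
  refine ⟨ω.1, _, fun i => (ω.2 i).ne_zero, B, by simpa using hBS, hB0, ?_, hdisj⟩
  rw [Set.ncard_coe_finset, Set.ncard_eq_toFinset_card']
  have hpos : 0 < (#S.toFinset : ℝ) ^ 2 * (n / Q) := by
    have := hk.trans hkn
    have := card_pos.2 ⟨0, Set.mem_toFinset.2 h0S⟩
    positivity
  have hexpand : (#S.toFinset : ℝ) * (1 - 2 * n * #S.toFinset / Q) =
      #S.toFinset - 2 * (#S.toFinset ^ 2 * (n / Q)) := by ring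
  rw [gt_iff_lt, hexpand]
  linarith

/-- Let `C` be a `k`-dimensional subspace of `F^n` satisfying
`A_i(C) < n · q^{-(n-k)} · binom(n,i)(q-1)^i` for all `1 ≤ i ≤ n`, and let `S ⊆ F^n` with
`0 ∈ S` and `|S| < q^{n-k}/(2n)`. Then there exist a monomial map `f` of `F^n` and a subset
`B ⊆ S` such that: (1) `0 ∈ B`; (2) `|B| > |S|·(1 − 2n·q^{-(n-k)}·|S|)`;
(3) the sets `{c + f(B) : c ∈ C}` are pairwise disjoint. -/
theorem universal_packing_of_white_code
    (F : Type*) [Field F] [Fintype F] [DecidableEq F] (q n k : ℕ)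
    (hq : Fintype.card F = q) (hk : 1 ≤ k) (hkn : k ≤ n)
    (C : Submodule F (Fin n → F)) (hC : Module.finrank F C = k)
    (hwd : ∀ i : ℕ, 1 ≤ i → i ≤ n →
      (({x : Fin n → F | x ∈ C ∧ hammingNorm x = i}.ncard : ℝ)) <
        (n : ℝ) * ((n.choose i * (q - 1) ^ i : ℕ) : ℝ) / (q : ℝ) ^ (n - k))
    (S : Set (Fin n → F)) (h0S : (0 : Fin n → F) ∈ S)
    (hS : (S.ncard : ℝ) < (q : ℝ) ^ (n - k) / (2 * n)) :
    ∃ (σ : Equiv.Perm (Fin n)) (v : Fin n → F), (∀ i, v i ≠ 0) ∧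
      ∃ B ⊆ S, (0 : Fin n → F) ∈ B ∧
        (B.ncard : ℝ) > (S.ncard : ℝ) * (1 - 2 * n * (S.ncard : ℝ) / (q : ℝ) ^ (n - k)) ∧
        (C : Set (Fin n → F)).Pairwise (fun c₁ c₂ =>
          Disjoint ((fun b => c₁ + b) '' (monomialMap σ v '' B))
            ((fun b => c₂ + b) '' (monomialMap σ v '' B))) :=
  universal_packing_of_white_code_general F q n k hq hk hkn C hwd S h0S
end

section
/- Let C be a k-dimensional subspace of F^n satisfying A_i(C) < n · q^{-(n-k)} · binom(n,i)(q-1)^i for all 1 ≤ i ≤ n. Let δ ∈ (0, 1 − 1/q) be such that H_q(δ) = 1 − k/n − (log_q n)/n, let ε > 0 with δn − ε ≥ 0, let r = ⌊δn − ε⌋, let S = {x ∈ F^n : wt(x) ≤ r} be the Hamming ball of radius r centered at 0, and set γ = δ/((q-1)(1-δ)). Then there exists B ⊆ S such that 0 ∈ B, |B| > |S|·(1 − γ^ε), and the sets {c + B : c ∈ C} are pairwise disjoint. -/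
/-!
Let `S` be the Hamming ball of radius `r`. Deleting from `S` every nonzero `x` that collides with
some `y ∈ S` (that is, `x - y ∈ C \ {0}`) leaves a set `B ∋ 0` with pairwise disjoint
`C`-translates, and `|S| - |B|` is at most the number of collisions `∑_{c ∈ C \ 0} N(c)`, where
`N(c) = #{(x, y) ∈ S² | x - y = c}`. Monomial maps preserve `S` and act transitively on each
Hamming sphere, so `N(c)` depends only on `wt c`, and the weight-distribution hypothesis bounds
the collisions by `n q^{-(n-k)} ∑_c N(c) = n q^{-(n-k)} |S|²`. The entropy condition says exactly
`n q^{-(n-k)} = γ^{δn} (1-δ)^n`, while `|S| γ^r < ∑_x γ^{wt x} = (1 + (q-1)γ)^n = (1-δ)^{-n}`;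
hence there are fewer than `γ^{δn-r} |S| ≤ γ^ε |S|` collisions.
-/

/-- The Hilbert entropy function
`H_q(x) = x·log_q(q-1) − x·log_q(x) − (1−x)·log_q(1−x)`
(with the convention `0·log 0 = 0`, automatic since `Real.log 0 = 0`). -/
noncomputable def hilbertEntropy (q : ℕ) (x : ℝ) : ℝ :=
  x * Real.logb q ((q : ℝ) - 1) - x * Real.logb q x - (1 - x) * Real.logb q (1 - x)

open Finset Polynomial

theorem coeff_one_add_C_mul_X_pow {R : Type*} [CommSemiring R] (m : R) (n i : ℕ) :
    ((1 + C m * X) ^ n).coeff i = n.choose i * m ^ i := by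
  rw [add_comm, add_pow, finsetSum_coeff]
  simp_rw [one_pow, mul_one, mul_pow, ← C_pow, mul_comm _ (n.choose _ : R[X]), ← C_eq_natCast,
    ← mul_assoc, ← C_mul, coeff_C_mul_X_pow]
  rw [sum_ite_eq]
  split_ifs with h
  · rfl
  · rw [Nat.choose_eq_zero_of_lt (by simpa using h)]; simp

section Hamming

variable {ι β : Type*} [Fintype ι] [DecidableEq β] [Zero β]

theorem hammingNorm_comp_equiv {κ : Type*} [Fintype κ] (x : ι → β) (e : κ ≃ ι) :
    hammingNorm (x ∘ e) = hammingNorm x :=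
  card_equiv e (by simp)

variable [DecidableEq ι] [Fintype β]

variable (ι β) in
def hammingBall (r : ℕ) : Finset (ι → β) := {x | hammingNorm x ≤ r}

@[simp]
theorem mem_hammingBall {r : ℕ} {x : ι → β} :
    x ∈ hammingBall ι β r ↔ hammingNorm x ≤ r :=
  mem_filter.trans (and_iff_right (mem_univ x))

theorem sum_pow_hammingNorm {R : Type*} [CommSemiring R] (a : R) :
    ∑ x : ι → β, a ^ hammingNorm x =
      (1 + ((Fintype.card β - 1 : ℕ) : R) * a) ^ Fintype.card ι := by
  have hcoord (x : ι → β) : a ^ hammingNorm x = ∏ t, if x t = 0 then 1 else a := by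
    rw [Finset.prod_ite, prod_const_one, prod_const, one_mul]
    rfl
  have hfibre : ∑ b : β, (if b = 0 then (1 : R) else a) =
      1 + ((Fintype.card β - 1 : ℕ) : R) * a := by
    rw [Finset.sum_ite, sum_const, sum_const, filter_eq', if_pos (mem_univ _), card_singleton,
      filter_ne', card_erase_of_mem (mem_univ _), card_univ]
    simp
  rw [Finset.sum_congr rfl fun x _ => hcoord x,
    ← Fintype.prod_sum (fun (_ : ι) (b : β) => if b = 0 then (1 : R) else a), hfibre,
    prod_const, card_univ]

theorem card_hammingNorm_eq (i : ℕ) :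
    #{x : ι → β | hammingNorm x = i} =
      (Fintype.card ι).choose i * (Fintype.card β - 1) ^ i := by
  have h := congrArg (coeff · i) (sum_pow_hammingNorm (ι := ι) (β := β) (X : ℕ[X]))
  simp only [finsetSum_coeff, coeff_X_pow, ← C_eq_natCast, coeff_one_add_C_mul_X_pow] at h
  simpa [sum_boole, eq_comm] using h

theorem card_hammingBall_mul_pow_lt [Nontrivial β] {r : ℕ}
    (hr : r < Fintype.card ι) {γ : ℝ} (hγ₀ : 0 < γ) (hγ₁ : γ ≤ 1) :
    (#(hammingBall ι β r) : ℝ) * γ ^ r <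
      (1 + ((Fintype.card β - 1 : ℕ) : ℝ) * γ) ^ Fintype.card ι := by
  obtain ⟨b, hb⟩ := exists_ne (0 : β)
  have hfar : hammingNorm (fun _ : ι => b) = Fintype.card ι := by simp [hammingNorm, hb]
  rw [← sum_pow_hammingNorm, ← nsmul_eq_mul, ← sum_const]
  calc ∑ x ∈ hammingBall ι β r, γ ^ r
      ≤ ∑ x ∈ hammingBall ι β r, γ ^ hammingNorm x :=
        sum_le_sum fun x hx => pow_le_pow_of_le_one hγ₀.le hγ₁ (mem_hammingBall.1 hx)
    _ < ∑ x : ι → β, γ ^ hammingNorm x :=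
        sum_lt_sum_of_subset (subset_univ _) (mem_univ (fun _ => b)) (by simp [hfar, hr])
          (by positivity) fun _ _ _ => by positivity

theorem sum_le_mul_sum_of_card_hammingNorm_le {g : (ι → β) → ℝ}
    (hg₀ : ∀ x, 0 ≤ g x) (hg : ∀ x y, hammingNorm x = hammingNorm y → g x = g y)
    (D : Finset (ι → β)) {l : ℝ} (hl : 0 ≤ l)
    (hD : ∀ c ∈ D, (#{x ∈ D | hammingNorm x = hammingNorm c} : ℝ) ≤
      l * #{x : ι → β | hammingNorm x = hammingNorm c}) :
    ∑ c ∈ D, g c ≤ l * ∑ x, g x := by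
  have hsphere (s : Finset (ι → β)) (c : ι → β) :
      ∑ x ∈ s with hammingNorm x = hammingNorm c, g x =
        #{x ∈ s | hammingNorm x = hammingNorm c} * g c := by
    rw [sum_congr rfl fun x hx => hg x c (mem_filter.1 hx).2, sum_const, nsmul_eq_mul]
  rw [← sum_fiberwise_of_maps_to fun c hc => mem_image_of_mem hammingNorm hc]
  calc ∑ i ∈ D.image hammingNorm, ∑ c ∈ D with hammingNorm c = i, g c
      ≤ ∑ i ∈ D.image hammingNorm, l * ∑ x with hammingNorm x = i, g x := by
        refine sum_le_sum fun i hi => ?_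
        obtain ⟨c, hc, rfl⟩ := mem_image.1 hi
        rw [hsphere, hsphere, ← mul_assoc]
        exact mul_le_mul_of_nonneg_right (hD c hc) (hg₀ c)
    _ = l * ∑ x with hammingNorm x ∈ D.image hammingNorm, g x := by
        rw [← mul_sum, sum_fiberwise_eq_sum_filter]
    _ ≤ l * ∑ x, g x :=
        mul_le_mul_of_nonneg_left
          (sum_le_sum_of_subset_of_nonneg (filter_subset _ _) fun x _ _ => hg₀ x) hl

variable {F : Type*} [DivisionRing F] [DecidableEq F]

theorem exists_addMonoidHom_hammingNorm_map_eq {c c' : ι → F}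
    (h : hammingNorm c = hammingNorm c') :
    ∃ φ : (ι → F) →+ (ι → F),
      (∀ x, hammingNorm (φ x) = hammingNorm x) ∧ φ c = c' := by
  -- `σ` carries the support of `c'` onto that of `c`; the diagonal factor `d` then fixes values.
  set s : Finset ι := {t | c t ≠ 0}
  obtain ⟨σ, hσ⟩ := (Set.powersetCard.isPretransitive (α := ι) (n := #s)).exists_smul_eq
    ⟨({t | c' t ≠ 0} : Finset ι), h.symm⟩ ⟨s, rfl⟩
  have hsupp (t : ι) : c (σ t) ≠ 0 ↔ c' t ≠ 0 := by
    have := congrArg (σ • t ∈ ·.1) hσ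
    simp only [Set.powersetCard.coe_smul, Finset.smul_mem_smul_finset_iff] at this
    simpa [s] using this.symm
  let d : ι → F := fun t => if c (σ t) = 0 then 1 else c' t / c (σ t)
  have hd (t : ι) : d t ≠ 0 := by
    by_cases ht : c (σ t) = 0 <;> simp [d, ht, (hsupp t).mp]
  refine ⟨{ toFun := fun x t => d t * x (σ t), map_zero' := ?_, map_add' := ?_ }, ?_, ?_⟩
  · ext; simp
  · intro x y; ext; simp [mul_add]
  · intro x
    change hammingNorm (fun t => d t * (x ∘ σ) t) = _
    rw [hammingNorm_comp (fun t => (d t * ·)) (fun t => mul_right_injective₀ (hd t)) (by simp),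
      hammingNorm_comp_equiv]
  · ext t
    by_cases ht : c (σ t) = 0
    · simpa [d, ht, eq_comm] using (hsupp t).not
    · simp [d, ht]

variable [Fintype F]

theorem card_sub_eq_of_hammingNorm_eq (r : ℕ) {c c' : ι → F}
    (h : hammingNorm c = hammingNorm c') :
    #{p ∈ hammingBall ι F r ×ˢ hammingBall ι F r | p.1 - p.2 = c} =
      #{p ∈ hammingBall ι F r ×ˢ hammingBall ι F r | p.1 - p.2 = c'} := by
  suffices key : ∀ c c' : ι → F, hammingNorm c = hammingNorm c' →
      #{p ∈ hammingBall ι F r ×ˢ hammingBall ι F r | p.1 - p.2 = c} ≤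
        #{p ∈ hammingBall ι F r ×ˢ hammingBall ι F r | p.1 - p.2 = c'} from
    (key c c' h).antisymm (key c' c h.symm)
  intro c c' h
  obtain ⟨φ, hφ, hφc⟩ := exists_addMonoidHom_hammingNorm_map_eq h
  have hinj : Function.Injective φ := (injective_iff_map_eq_zero φ).2 fun x hx =>
    hammingNorm_eq_zero.1 (by rw [← hφ, hx, hammingNorm_zero])
  refine card_le_card_of_injOn (Prod.map φ φ) (fun p hp => ?_) (hinj.prodMap hinj).injOn
  simp only [coe_filter, mem_product, mem_hammingBall, Set.mem_ofPred_eq] at hp ⊢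
  simp only [Prod.map_fst, Prod.map_snd, hφ, ← map_sub, hp, hφc, and_self]

theorem card_hammingBall_sub_mem_le {r : ℕ} {D : Finset (ι → F)} {l : ℝ} (hl : 0 ≤ l)
    (hD : ∀ c ∈ D, (#{x ∈ D | hammingNorm x = hammingNorm c} : ℝ) ≤
      l * #{x : ι → F | hammingNorm x = hammingNorm c}) :
    (#{p ∈ hammingBall ι F r ×ˢ hammingBall ι F r | p.1 - p.2 ∈ D} : ℝ) ≤
      l * (#(hammingBall ι F r) * #(hammingBall ι F r)) := by
  set S := hammingBall ι F r
  have hfibres :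
      #{p ∈ S ×ˢ S | p.1 - p.2 ∈ D} = ∑ c ∈ D, #{p ∈ S ×ˢ S | p.1 - p.2 = c} := by
    rw [card_eq_sum_card_fiberwise (s := {p ∈ S ×ˢ S | p.1 - p.2 ∈ D}) (t := D)
      fun p hp => (mem_filter.1 hp).2]
    refine sum_congr rfl fun c hc => ?_
    rw [filter_filter]
    exact congrArg card (filter_congr fun p _ => and_iff_right_of_imp fun h => h ▸ hc)
  have htotal : #S * #S = ∑ c, #{p ∈ S ×ˢ S | p.1 - p.2 = c} :=
    (card_product S S).symm.trans (card_eq_sum_card_fiberwise fun _ _ => mem_univ _)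
  rw [hfibres, ← Nat.cast_mul, htotal]
  push_cast
  exact sum_le_mul_sum_of_card_hammingNorm_le (fun _ => Nat.cast_nonneg _)
    (fun c c' h => congrArg Nat.cast (card_sub_eq_of_hammingNorm_eq r h)) D hl hD

theorem AddSubgroup.card_hammingBall_collisions_le (C : AddSubgroup (ι → F))
    [DecidablePred (· ∈ C)] (r : ℕ) {l : ℝ} (hl : 0 ≤ l)
    (hC : ∀ c ∈ C, c ≠ 0 →
      ({x | x ∈ C ∧ hammingNorm x = hammingNorm c}.ncard : ℝ) ≤
        l * #{x : ι → F | hammingNorm x = hammingNorm c}) :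
    (#{p ∈ hammingBall ι F r ×ˢ hammingBall ι F r | p.1 - p.2 ∈ C ∧ p.1 ≠ p.2} : ℝ) ≤
      l * (#(hammingBall ι F r) * #(hammingBall ι F r)) := by
  set D : Finset (ι → F) := {c | c ∈ C ∧ c ≠ 0}
  have hfilter (c : ι → F) (hc : c ≠ 0) : {x ∈ D | hammingNorm x = hammingNorm c} =
      ({x | x ∈ C ∧ hammingNorm x = hammingNorm c} : Finset (ι → F)) := by
    ext x
    simp only [D, mem_filter, mem_univ, true_and, and_right_comm, and_iff_left_iff_imp]
    exact fun ⟨_, hx⟩ => hammingNorm_ne_zero_iff.1 (hx ▸ hammingNorm_ne_zero_iff.2 hc)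
  convert card_hammingBall_sub_mem_le (r := r) (D := D) hl fun c hc => ?_ using 4
  · simp [D, sub_eq_zero]
  · obtain ⟨hcC, hc0⟩ := (mem_filter.1 hc).2
    rw [hfilter c hc0, ← Set.ncard_coe_finset, coe_filter_univ]
    exact hC c hcC hc0

end Hamming

theorem AddSubgroup.exists_subset_pairwise_disjoint_translates {G : Type*} [AddCommGroup G]
    [DecidableEq G] (C : AddSubgroup G) [DecidablePred (· ∈ C)] (S : Finset G) (h0 : 0 ∈ S) :
    ∃ B ⊆ S, 0 ∈ B ∧ #S ≤ #B + #{p ∈ S ×ˢ S | p.1 - p.2 ∈ C ∧ p.1 ≠ p.2} ∧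
      (C : Set G).Pairwise fun c₁ c₂ =>
        Disjoint ((fun b => c₁ + b) '' ↑B) ((fun b => c₂ + b) '' ↑B) := by
  set P := {p ∈ S ×ˢ S | p.1 - p.2 ∈ C ∧ p.1 ≠ p.2}
  set B := insert 0 (S \ P.image Prod.fst)
  have hBS : B ⊆ S := insert_subset h0 sdiff_subset
  have hcollision : ∀ b ∈ B, ∀ b' ∈ B, b - b' ∈ C → b ≠ b' → b = 0 := by
    intro b hb b' hb' hC hne
    refine (mem_insert.1 hb).resolve_right fun hb => (mem_sdiff.1 hb).2 ?_
    exact mem_image.2 ⟨(b, b'), mem_filter.2 ⟨mem_product.2 ⟨hBS (mem_insert_of_mem hb),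
      hBS hb'⟩, hC, hne⟩, rfl⟩
  refine ⟨B, hBS, mem_insert_self _ _, ?_, ?_⟩
  · calc #S ≤ #(S \ P.image Prod.fst) + #(P.image Prod.fst) := card_le_card_sdiff_add_card
      _ ≤ #B + #P := add_le_add (card_le_card (subset_insert _ _)) card_image_le
  · rintro c₁ hc₁ c₂ hc₂ hne
    rw [Set.disjoint_left]
    rintro _ ⟨b₁, hb₁, rfl⟩ ⟨b₂, hb₂, heq : c₂ + b₂ = c₁ + b₁⟩
    have hsub : b₁ - b₂ = c₂ - c₁ := by
      rw [sub_eq_sub_iff_add_eq_add, add_comm, heq, add_comm]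
    have hb : b₁ ≠ b₂ := fun h => hne (by simpa [h] using heq.symm)
    have h₁ := hcollision b₁ hb₁ b₂ hb₂ (hsub ▸ C.sub_mem hc₂ hc₁) hb
    have h₂ := hcollision b₂ hb₂ b₁ hb₁
      (by rw [← neg_sub, hsub]; exact C.neg_mem (C.sub_mem hc₂ hc₁)) hb.symm
    exact hb (h₁.trans h₂.symm)

open Real in
theorem rpow_mul_one_sub_pow_eq_of_hilbertEntropy_eq {q n k : ℕ} {δ : ℝ} (hq : 1 < q)
    (hn : 0 < n) (hkn : k ≤ n) (hδ₀ : 0 < δ) (hδ₁ : δ < 1)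
    (hH : hilbertEntropy q δ = 1 - (k : ℝ) / n - logb q n / n) :
    (δ / (((q : ℝ) - 1) * (1 - δ))) ^ (δ * n) * (1 - δ) ^ n =
      (n : ℝ) / (q : ℝ) ^ (n - k) := by
  have hq₁ : (0 : ℝ) < q - 1 := by rw [sub_pos]; exact_mod_cast hq
  have hδ' : 0 < 1 - δ := by linarith
  have hn' : (0 : ℝ) < n := by exact_mod_cast hn
  have hlogq : 0 < log q := log_pos (by exact_mod_cast hq)
  have hH' : n * (δ * log (q - 1) - δ * log δ - (1 - δ) * log (1 - δ)) =
      (n - k) * log q - log n := by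
    simp only [hilbertEntropy, logb] at hH
    field_simp at hH
    linear_combination hH
  refine log_injOn_pos (Set.mem_Ioi.2 (by positivity)) (Set.mem_Ioi.2 (by positivity)) ?_
  rw [log_mul (by positivity) (by positivity), log_rpow (by positivity), log_pow,
    log_div hn'.ne' (by positivity), log_pow, log_div hδ₀.ne' (by positivity),
    log_mul hq₁.ne' hδ'.ne', Nat.cast_sub hkn]
  linear_combination -hH'

theorem div_mul_card_hammingBall_lt_rpow (F : Type*) [Field F] [Fintype F] [DecidableEq F]
    {n k r : ℕ} (hn : 0 < n) (hkn : k ≤ n) {δ ε : ℝ}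
    (hδ : δ ∈ Set.Ioo 0 (1 - 1 / (Fintype.card F : ℝ)))
    (hH : hilbertEntropy (Fintype.card F) δ = 1 - (k : ℝ) / n - Real.logb (Fintype.card F) n / n)
    (hr : (r : ℝ) ≤ δ * n - ε) (hε : 0 < ε) :
    (n : ℝ) / (Fintype.card F : ℝ) ^ (n - k) * #(hammingBall (Fin n) F r) <
      (δ / (((Fintype.card F : ℝ) - 1) * (1 - δ))) ^ ε := by
  set q := Fintype.card F
  set γ := δ / (((q : ℝ) - 1) * (1 - δ))
  obtain ⟨hδ₀, hδq⟩ := hδ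
  have hq : 1 < q := Fintype.one_lt_card
  have hq₁ : ((q - 1 : ℕ) : ℝ) = q - 1 := Nat.cast_pred Fintype.card_pos
  have hq₁pos : (0 : ℝ) < q - 1 := by rw [← hq₁]; exact_mod_cast Nat.sub_pos_of_lt hq
  have hδ₁ : δ < 1 := hδq.trans_le (by simp)
  have hγ₀ : 0 < γ := by positivity
  have hγ₁ : γ < 1 := by
    rw [div_lt_one (by nlinarith)]
    have : 1 / (q : ℝ) * q = 1 := by field_simp
    nlinarith
  have hrn : r < n := by
    have : (r : ℝ) < n := by nlinarith
    exact_mod_cast this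
  have hball : (#(hammingBall (Fin n) F r) : ℝ) * γ ^ r * (1 - δ) ^ n < 1 := by
    have h :=
      card_hammingBall_mul_pow_lt (ι := Fin n) (β := F) (by simpa using hrn) hγ₀ hγ₁.le
    rw [Fintype.card_fin, hq₁] at h
    have hδ' : 1 - δ ≠ 0 := by linarith
    calc _ < (1 + (q - 1) * γ) ^ n * (1 - δ) ^ n := by gcongr
      _ = 1 := by
        rw [← mul_pow]
        simp only [γ]
        field_simp
        ring
  have hentropy : γ ^ (δ * n) * (1 - δ) ^ n = n / q ^ (n - k) :=
    rpow_mul_one_sub_pow_eq_of_hilbertEntropy_eq hq hn hkn hδ₀ hδ₁ hH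
  calc (n : ℝ) / q ^ (n - k) * #(hammingBall (Fin n) F r)
      = γ ^ (δ * n - r) * (#(hammingBall (Fin n) F r) * γ ^ r * (1 - δ) ^ n) := by
        rw [← hentropy, Real.rpow_sub hγ₀, Real.rpow_natCast]
        field_simp
    _ < γ ^ (δ * n - r) := mul_lt_of_lt_one_right (by positivity) hball
    _ ≤ γ ^ ε := Real.rpow_le_rpow_of_exponent_ge hγ₀ hγ₁.le (by linarith)

theorem rough_sphere_packing_general
    (F : Type*) [Field F] [Fintype F] [DecidableEq F] (q n k : ℕ)
    (hq : Fintype.card F = q) (hk : 1 ≤ k) (hkn : k ≤ n)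
    (C : Submodule F (Fin n → F))
    (hwd : ∀ i : ℕ, 1 ≤ i → i ≤ n →
      (({x : Fin n → F | x ∈ C ∧ hammingNorm x = i}.ncard : ℝ)) <
        (n : ℝ) * ((n.choose i * (q - 1) ^ i : ℕ) : ℝ) / (q : ℝ) ^ (n - k))
    (δ : ℝ) (hδ : δ ∈ Set.Ioo (0 : ℝ) (1 - 1 / q))
    (hHδ : hilbertEntropy q δ = 1 - (k : ℝ) / n - Real.logb q n / n)
    (ε : ℝ) (hε : ε > 0) (hδε : δ * n - ε ≥ 0)
    (r : ℕ) (hr : r = ⌊δ * n - ε⌋₊)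
    (S : Set (Fin n → F)) (hSdef : S = {x : Fin n → F | hammingNorm x ≤ r})
    (γ : ℝ) (hγ : γ = δ / (((q : ℝ) - 1) * (1 - δ))) :
    ∃ B ⊆ S, (0 : Fin n → F) ∈ B ∧
      (B.ncard : ℝ) > (S.ncard : ℝ) * (1 - γ ^ ε) ∧
      (C : Set (Fin n → F)).Pairwise (fun c₁ c₂ =>
        Disjoint ((fun b => c₁ + b) '' B) ((fun b => c₂ + b) '' B)) := by
  classical
  subst hq
  have hn : 0 < n := by omega
  set ball := hammingBall (Fin n) F r
  have hcollisions := C.toAddSubgroup.card_hammingBall_collisions_le r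
    (l := n / (Fintype.card F : ℝ) ^ (n - k)) (by positivity) fun c _ hc0 => by
      rw [card_hammingNorm_eq, Fintype.card_fin, div_mul_eq_mul_div]
      exact (hwd _ (hammingNorm_pos_iff.2 hc0)
        (hammingNorm_le_card_fintype.trans_eq (Fintype.card_fin n))).le
  obtain ⟨B, hBS, hB0, hcard, hdisj⟩ :=
    C.toAddSubgroup.exists_subset_pairwise_disjoint_translates ball (by simp [ball])
  have hdensity := div_mul_card_hammingBall_lt_rpow F hn hkn hδ hHδ (hr ▸ Nat.floor_le hδε) hε
  have hS : S = ↑ball := by ext; simp [hSdef, ball]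
  refine ⟨B, hS ▸ coe_subset.2 hBS, hB0, ?_, hdisj⟩
  have hcard' := (Nat.cast_le (α := ℝ)).2 hcard
  have hball : (0 : ℝ) < #ball := by exact_mod_cast card_pos.2 ⟨0, by simp [ball]⟩
  rw [hS, Set.ncard_coe_finset, Set.ncard_coe_finset, hγ]
  push_cast at hcard'
  nlinarith [mul_lt_mul_of_pos_right hdensity hball]

/-- Let `C` be a `k`-dimensional subspace of `F^n` satisfying
`A_i(C) < n · q^{-(n-k)} · binom(n,i)(q-1)^i` for all `1 ≤ i ≤ n`. Let `δ ∈ (0, 1 − 1/q)`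
be such that `H_q(δ) = 1 − k/n − (log_q n)/n`, let `ε > 0` with `δn − ε ≥ 0`,
let `r = ⌊δn − ε⌋`, let `S = {x ∈ F^n : wt(x) ≤ r}` be the Hamming ball of radius `r`
centered at `0`, and set `γ = δ/((q-1)(1-δ))`. Then there exists `B ⊆ S` such that
`0 ∈ B`, `|B| > |S|·(1 − γ^ε)`, and the sets `{c + B : c ∈ C}` are pairwise disjoint. -/
theorem rough_sphere_packing
    (F : Type*) [Field F] [Fintype F] [DecidableEq F] (q n k : ℕ)
    (hq : Fintype.card F = q) (hk : 1 ≤ k) (hkn : k ≤ n)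
    (C : Submodule F (Fin n → F)) (hC : Module.finrank F C = k)
    (hwd : ∀ i : ℕ, 1 ≤ i → i ≤ n →
      (({x : Fin n → F | x ∈ C ∧ hammingNorm x = i}.ncard : ℝ)) <
        (n : ℝ) * ((n.choose i * (q - 1) ^ i : ℕ) : ℝ) / (q : ℝ) ^ (n - k))
    (δ : ℝ) (hδ : δ ∈ Set.Ioo (0 : ℝ) (1 - 1 / q))
    (hHδ : hilbertEntropy q δ = 1 - (k : ℝ) / n - Real.logb q n / n)
    (ε : ℝ) (hε : ε > 0) (hδε : δ * n - ε ≥ 0)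
    (r : ℕ) (hr : r = ⌊δ * n - ε⌋₊)
    (S : Set (Fin n → F)) (hSdef : S = {x : Fin n → F | hammingNorm x ≤ r})
    (γ : ℝ) (hγ : γ = δ / (((q : ℝ) - 1) * (1 - δ))) :
    ∃ B ⊆ S, (0 : Fin n → F) ∈ B ∧
      (B.ncard : ℝ) > (S.ncard : ℝ) * (1 - γ ^ ε) ∧
      (C : Set (Fin n → F)).Pairwise (fun c₁ c₂ =>
        Disjoint ((fun b => c₁ + b) '' B) ((fun b => c₂ + b) '' B)) :=
  rough_sphere_packing_general F q n k hq hk hkn C hwd δ hδ hHδ ε hε hδε r hr S hSdef γ hγ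
end

section
/- Let F be a finite field with q elements, n ≥ 1, and x, y ∈ F^n. Then binom(n, wt(x+y))·(q-1)^{wt(x+y)} ≤ β(wt(x), wt(y)) · binom(n, wt(x))·(q-1)^{wt(x)} · binom(n, wt(y))·(q-1)^{wt(y)}, where β(w₁, w₂) = max{w₁, n−w₁, w₂, n−w₂}/n (an inequality of real numbers). -/
/-!
Write `a`, `b`, `c` for the weights of `x`, `y`, `x + y` and `r = q - 1`; the weights satisfy the
triangle inequalities, and by symmetry `a ≤ b`. If `a + b ≤ n`, splitting with `Nat.choose_mul`
and unimodality give `C(n,c) ≤ C(n-1,a) * C(n,b)`, and `n * C(n-1,a) = (n-a) * C(n,a)`.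
If `a + b ≥ n` but `a + b + c ≤ 2n`, the same bound applies to the complementary weights
`n - b`, `n - a`. If `a + b + c > 2n`, some coordinate has `x i`, `y i`, `x i + y i` all
nonzero, which is impossible over `𝔽₂`; so `r ≥ 2`, and the surplus factor `r ^ (a + b - c)`
absorbs the loss in `C(n,c) ≤ C(n,a) * C(a,c)`.
-/

namespace Nat

variable {n k l a b c : ℕ}

theorem choose_le_choose_of_le_of_two_mul_le (hkl : k ≤ l) (hl : 2 * l ≤ n + 1) :
    n.choose k ≤ n.choose l := by
  induction l, hkl using Nat.le_induction with
  | base => rfl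
  | succ l _ ih =>
    refine (ih (by omega)).trans (Nat.le_of_mul_le_mul_right ?_ (by omega : 0 < l + 1))
    calc n.choose l * (l + 1) ≤ n.choose l * (n - l) := Nat.mul_le_mul_left _ (by omega)
      _ = n.choose (l + 1) * (l + 1) := (choose_succ_right_eq n l).symm

theorem choose_le_choose_of_le_of_add_le (hkl : k ≤ l) (hkln : k + l ≤ n) :
    n.choose k ≤ n.choose l := by
  rcases le_or_gt (2 * l) (n + 1) with hl | hl
  · exact choose_le_choose_of_le_of_two_mul_le hkl hl
  · rw [← choose_symm (by omega : l ≤ n)]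
    exact choose_le_choose_of_le_of_two_mul_le (by omega) (by omega)

theorem choose_le_choose_mul_choose (hca : c ≤ a) (han : a ≤ n) :
    n.choose c ≤ n.choose a * a.choose c := by
  rw [choose_mul hca]
  exact Nat.le_mul_of_pos_right _ (choose_pos (by omega))

theorem choose_le_choose_mul_choose_sub (hbc : b ≤ c) :
    n.choose c ≤ n.choose b * (n - b).choose (c - b) := by
  rw [← choose_mul hbc]
  exact Nat.le_mul_of_pos_right _ (choose_pos hbc)

theorem mul_choose_sub_one (n a : ℕ) : n * (n - 1).choose a = (n - a) * n.choose a := by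
  cases n with
  | zero => simp
  | succ m => rw [Nat.add_sub_cancel, mul_comm, choose_mul_succ_eq, mul_comm]

theorem le_mul_choose (hb : 0 < b) (hbn : b ≤ n) : n ≤ b * n.choose b := by
  obtain ⟨m, rfl⟩ : ∃ m, n = m + 1 := ⟨n - 1, by omega⟩
  obtain ⟨k, rfl⟩ : ∃ k, b = k + 1 := ⟨b - 1, by omega⟩
  rw [mul_comm, ← add_one_mul_choose_eq]
  exact Nat.le_mul_of_pos_right _ (choose_pos (by omega))

theorem choose_le_choose_sub_one_mul_choose (hab : a ≤ b) (habn : a + b ≤ n)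
    (hbc : b ≤ a + c) (hcab : c ≤ a + b) : n.choose c ≤ (n - 1).choose a * n.choose b := by
  rw [mul_comm]
  rcases le_or_gt b c with hbc' | hcb
  · rcases Nat.eq_zero_or_pos b with rfl | hb
    · obtain ⟨rfl, rfl⟩ : a = 0 ∧ c = 0 := by omega
      simp
    calc n.choose c ≤ n.choose b * (n - b).choose (c - b) := choose_le_choose_mul_choose_sub hbc'
      _ ≤ n.choose b * (n - 1).choose (c - b) := by gcongr; omega
      _ ≤ n.choose b * (n - 1).choose a := by
        gcongr; exact choose_le_choose_of_le_of_two_mul_le (by omega) (by omega)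
  · calc n.choose c ≤ n.choose b * b.choose c := choose_le_choose_mul_choose hcb.le (by omega)
      _ = n.choose b * b.choose (b - c) := by rw [choose_symm hcb.le]
      _ ≤ n.choose b * (n - 1).choose (b - c) := by gcongr; omega
      _ ≤ n.choose b * (n - 1).choose a := by
        gcongr; exact choose_le_choose_of_le_of_two_mul_le (by omega) (by omega)

end Nat

section WeightInequality

variable {n a b c r : ℕ}

theorem mul_choose_le_sub_mul_choose_mul_choose (hab : a ≤ b) (habn : a + b ≤ n)
    (hbc : b ≤ a + c) (hcab : c ≤ a + b) :
    n * n.choose c ≤ (n - a) * n.choose a * n.choose b := by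
  calc n * n.choose c ≤ n * ((n - 1).choose a * n.choose b) :=
        Nat.mul_le_mul_left _ (Nat.choose_le_choose_sub_one_mul_choose hab habn hbc hcab)
    _ = (n - a) * n.choose a * n.choose b := by rw [← mul_assoc, Nat.mul_choose_sub_one]

theorem mul_choose_le_max_mul_choose_mul_choose (hab : a ≤ b) (hbn : b ≤ n)
    (hbc : b ≤ a + c) (hcab : c ≤ a + b) (habc : a + b + c ≤ 2 * n) :
    n * n.choose c ≤ max (n - a) b * n.choose a * n.choose b := by
  rcases le_total (a + b) n with habn | hnab
  · calc n * n.choose c ≤ (n - a) * n.choose a * n.choose b :=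
          mul_choose_le_sub_mul_choose_mul_choose hab habn hbc hcab
      _ ≤ max (n - a) b * n.choose a * n.choose b := by gcongr; exact le_max_left _ _
  · have h := mul_choose_le_sub_mul_choose_mul_choose (n := n) (a := n - b) (b := n - a) (c := c)
      (by omega) (by omega) (by omega) (by omega)
    rw [Nat.sub_sub_self hbn, Nat.choose_symm hbn, Nat.choose_symm (hab.trans hbn)] at h
    calc n * n.choose c ≤ b * n.choose b * n.choose a := h
      _ ≤ max (n - a) b * n.choose a * n.choose b := by
        rw [mul_right_comm]; gcongr; exact le_max_right _ _

theorem choose_mul_pow_le_choose_mul_pow (hr : 2 ≤ r) (hab : a ≤ b) (hbn : b ≤ n)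
    (hcn : c ≤ n) (hcab : c ≤ a + b) (habc : 2 * n < a + b + c) :
    n.choose c * r ^ c ≤ n.choose a * r ^ (a + b) := by
  rcases le_or_gt a c with hac | hca
  · calc n.choose c * r ^ c = n.choose (n - c) * r ^ c := by rw [Nat.choose_symm hcn]
      _ ≤ n.choose a * r ^ (a + b) := by
        gcongr
        · exact Nat.choose_le_choose_of_le_of_add_le (by omega) (by omega)
        · omega
  · calc n.choose c * r ^ c ≤ n.choose a * a.choose c * r ^ c := by
          gcongr; exact Nat.choose_le_choose_mul_choose hca.le (hab.trans hbn)
      _ ≤ n.choose a * r ^ a * r ^ c := by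
          gcongr
          exact (Nat.choose_le_two_pow a c).trans (Nat.pow_le_pow_left hr a)
      _ ≤ n.choose a * r ^ (a + b) := by
          rw [mul_assoc, ← pow_add]; gcongr <;> omega

theorem choose_mul_pow_mul_le_of_le (hr : 1 ≤ r) (hab : a ≤ b) (hbn : b ≤ n) (hcn : c ≤ n)
    (hbc : b ≤ a + c) (hcab : c ≤ a + b) (hr_or_habc : 2 ≤ r ∨ a + b + c ≤ 2 * n) :
    n.choose c * r ^ c * n ≤ max (n - a) b * (n.choose a * r ^ a) * (n.choose b * r ^ b) := by
  suffices n * n.choose c * r ^ c ≤ max (n - a) b * n.choose a * n.choose b * r ^ (a + b) by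
    rw [pow_add] at this; linarith
  rcases le_or_gt (a + b + c) (2 * n) with habc | habc
  · exact Nat.mul_le_mul (mul_choose_le_max_mul_choose_mul_choose hab hbn hbc hcab habc)
      (Nat.pow_le_pow_right hr hcab)
  · have hr2 : 2 ≤ r := hr_or_habc.resolve_right (by omega)
    calc n * n.choose c * r ^ c = n * (n.choose c * r ^ c) := mul_assoc _ _ _
      _ ≤ (b * n.choose b) * (n.choose a * r ^ (a + b)) :=
          Nat.mul_le_mul (Nat.le_mul_choose (by omega) hbn)
            (choose_mul_pow_le_choose_mul_pow hr2 hab hbn hcn hcab habc)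
      _ = b * n.choose a * n.choose b * r ^ (a + b) := by ring
      _ ≤ max (n - a) b * n.choose a * n.choose b * r ^ (a + b) := by
          gcongr; exact le_max_right _ _

theorem choose_mul_pow_mul_le (hr : 1 ≤ r) (han : a ≤ n) (hbn : b ≤ n) (hcn : c ≤ n)
    (hcab : c ≤ a + b) (hac : a ≤ b + c) (hbc : b ≤ a + c)
    (hr_or_habc : 2 ≤ r ∨ a + b + c ≤ 2 * n) :
    n.choose c * r ^ c * n ≤
      max (max a (n - a)) (max b (n - b)) * (n.choose a * r ^ a) * (n.choose b * r ^ b) := by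
  rcases le_total a b with hab | hba
  · refine (choose_mul_pow_mul_le_of_le hr hab hbn hcn hbc hcab hr_or_habc).trans ?_
    gcongr ?_ * _ * _
    omega
  · calc n.choose c * r ^ c * n
        ≤ max (n - b) a * (n.choose b * r ^ b) * (n.choose a * r ^ a) :=
          choose_mul_pow_mul_le_of_le hr hba han hcn hac (by omega) (by omega)
      _ ≤ max (max a (n - a)) (max b (n - b)) * (n.choose b * r ^ b) * (n.choose a * r ^ a) := by
          gcongr ?_ * _ * _
          omega
      _ = _ := mul_right_comm _ _ _

end WeightInequality

section Hamming

variable {ι : Type*} [Fintype ι]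

theorem hammingNorm_add_le {β : ι → Type*} [∀ i, AddGroup (β i)] [∀ i, DecidableEq (β i)]
    (x y : ∀ i, β i) : hammingNorm (x + y) ≤ hammingNorm x + hammingNorm y := by
  have h := hammingDist_triangle 0 x (x + y)
  rwa [hammingDist_zero_left, hammingDist_eq_hammingNorm, neg_add_cancel_left] at h

theorem hammingNorm_neg {β : ι → Type*} [∀ i, AddGroup (β i)] [∀ i, DecidableEq (β i)]
    (x : ∀ i, β i) : hammingNorm (-x) = hammingNorm x :=
  hammingNorm_comp (fun _ => Neg.neg) (fun _ => neg_injective) fun _ => neg_zero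

theorem hammingNorm_add_hammingNorm_add_hammingNorm_add_le_of_card_le_two {G : Type*}
    [AddGroup G] [Fintype G] [DecidableEq G] (hG : Fintype.card G ≤ 2) (x y : ι → G) :
    hammingNorm x + hammingNorm y + hammingNorm (x + y) ≤ 2 * Fintype.card ι := by
  have hcoord : ∀ u v : G, u ≠ 0 → v ≠ 0 → u + v = 0 := by
    intro u v hu hv
    by_contra huv
    have : 2 < Fintype.card G :=
      Fintype.two_lt_card_iff.2 ⟨0, u, u + v, Ne.symm hu, Ne.symm huv, by simpa using hv⟩
    omega
  simp only [hammingNorm, Finset.card_filter, ← Finset.sum_add_distrib]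
  calc _ ≤ ∑ _ : ι, 2 := Finset.sum_le_sum fun i _ => by
          by_cases hx : x i = 0 <;> by_cases hy : y i = 0 <;> simp [hx, hy, hcoord]
    _ = 2 * Fintype.card ι := by simp [mul_comm]

end Hamming

/-- Let `F` be a finite field with `q` elements, `n ≥ 1`, and `x, y ∈ F^n`.
Then `binom(n, wt(x+y))·(q-1)^{wt(x+y)} ≤ β(wt(x), wt(y)) · binom(n, wt(x))·(q-1)^{wt(x)}
· binom(n, wt(y))·(q-1)^{wt(y)}`, where `β(w₁, w₂) = max{w₁, n−w₁, w₂, n−w₂}/n`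
(an inequality of real numbers); this is the exponentiated triangle-type inequality
`q^{ew(x+y)} ≤ β(wt(x),wt(y))·q^{ew(x)+ew(y)}` for entropy weight. -/
theorem entropy_weight_exponentiated_triangle_inequality
    (F : Type*) [Field F] [Fintype F] [DecidableEq F] (q n : ℕ)
    (hq : Fintype.card F = q) (hn : 1 ≤ n) (x y : Fin n → F) :
    ((n.choose (hammingNorm (x + y)) * (q - 1) ^ hammingNorm (x + y) : ℕ) : ℝ) ≤
      ((max (max (hammingNorm x) (n - hammingNorm x))
          (max (hammingNorm y) (n - hammingNorm y)) : ℕ) : ℝ) / (n : ℝ) *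
        ((n.choose (hammingNorm x) * (q - 1) ^ hammingNorm x : ℕ) : ℝ) *
        ((n.choose (hammingNorm y) * (q - 1) ^ hammingNorm y : ℕ) : ℝ) := by
  have hq2 : 2 ≤ q := hq ▸ Fintype.one_lt_card
  have hr_or_habc : 2 ≤ q - 1 ∨
      hammingNorm x + hammingNorm y + hammingNorm (x + y) ≤ 2 * n := by
    rcases Nat.lt_or_ge 2 q with h | h
    · exact Or.inl (by omega)
    · simpa using Or.inr (hammingNorm_add_hammingNorm_add_hammingNorm_add_le_of_card_le_two
        (hq ▸ h) x y)
  have key := choose_mul_pow_mul_le (n := n) (by omega)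
    (by simpa using hammingNorm_le_card_fintype (x := x))
    (by simpa using hammingNorm_le_card_fintype (x := y))
    (by simpa using hammingNorm_le_card_fintype (x := x + y))
    (hammingNorm_add_le x y)
    (by simpa [hammingNorm_neg, add_comm] using hammingNorm_add_le (x + y) (-y))
    (by simpa [hammingNorm_neg, add_comm] using hammingNorm_add_le (x + y) (-x))
    hr_or_habc
  rw [div_mul_eq_mul_div, div_mul_eq_mul_div, le_div_iff₀ (by exact_mod_cast hn)]
  exact_mod_cast key
end

section
/- Let F be a finite field with q elements and n ≥ 2. The largest cardinality of a linear code C ⊆ F^n all of whose nonzero codewords c satisfy binom(n, wt(c))·(q-1)^{wt(c)} ≥ n·(q-1) equals 2^{n-1} if q = 2, and equals q^n if q ≥ 3. -/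
/-!
Write `k = q - 1` and `w = wt c`. For `1 ≤ w < n` we have `n ≤ binom(n, w)` and `k ≤ k ^ w`, so
every nonzero word with a zero coordinate satisfies the bound, whatever `q` is; hence the
coordinate hyperplane `{c | c i = 0}`, of size `q ^ (n - 1)`, always qualifies. For `w = n` the bound reads
`n * k ≤ k ^ n`: it holds when `k ≥ 2`, so all of `F ^ n` qualifies when `q ≥ 3`, and it fails when
`k = 1`, so for `q = 2` the all-ones word is excluded and a qualifying code is a proper subspace.
-/

theorem Nat.self_le_choose : ∀ {n w : ℕ}, 0 < w → w < n → n ≤ n.choose w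
  | _, 0, _, _ | 0, _, _, _ => by omega
  | n + 1, k + 1, _, hkn => by
    rcases (Nat.lt_succ_iff.mp hkn).eq_or_lt with rfl | hlt
    · rw [Nat.choose_succ_self_right]
    · have := Nat.choose_pos (n := n) (k := k) (by omega)
      have := Nat.self_le_choose k.succ_pos hlt
      rw [Nat.choose_succ_succ]
      omega

theorem Nat.mul_le_pow_self {k : ℕ} (hk : 2 ≤ k) : ∀ n : ℕ, n * k ≤ k ^ n
  | 0 => by simp
  | m + 1 => by
    rw [pow_succ]
    exact Nat.mul_le_mul_right k (Nat.lt_pow_self hk)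

theorem Nat.mul_le_choose_mul_pow {n w : ℕ} (k : ℕ) (hw : 0 < w) (hwn : w < n) :
    n * k ≤ n.choose w * k ^ w :=
  Nat.mul_le_mul (Nat.self_le_choose hw hwn) (Nat.le_self_pow hw.ne' k)

theorem Nat.mul_le_choose_mul_pow_of_two_le {n w k : ℕ} (hk : 2 ≤ k) (hw : 0 < w) (hwn : w ≤ n) :
    n * k ≤ n.choose w * k ^ w := by
  rcases hwn.lt_or_eq with hlt | rfl
  · exact Nat.mul_le_choose_mul_pow k hw hlt
  · rw [Nat.choose_self, one_mul]
    exact Nat.mul_le_pow_self hk w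

section Hamming
variable {ι : Type*} [Fintype ι]

theorem hammingNorm_lt_card_of_apply_eq_zero {β : ι → Type*} [∀ i, DecidableEq (β i)]
    [∀ i, Zero (β i)] {x : ∀ i, β i} {i : ι} (hi : x i = 0) :
    hammingNorm x < Fintype.card ι :=
  Finset.card_lt_univ_of_notMem (x := i) (by simpa using hi)

theorem hammingNorm_const {β : Type*} [DecidableEq β] [Zero β] {a : β} (ha : a ≠ 0) :
    hammingNorm (fun _ : ι => a) = Fintype.card ι := by
  simp [hammingNorm, ha]

end Hamming

section Codes
variable {F : Type*} [Field F]

theorem natCard_ker_proj {ι : Type*} [Fintype ι] (i : ι) :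
    Nat.card (LinearMap.ker (LinearMap.proj i : (ι → F) →ₗ[F] F)) =
      Nat.card F ^ (Fintype.card ι - 1) := by
  have hrank := LinearMap.finrank_range_add_finrank_ker (LinearMap.proj i : (ι → F) →ₗ[F] F)
  rw [LinearMap.range_eq_top.mpr (Function.surjective_eval i), finrank_top,
    Module.finrank_self, Module.finrank_fintype_fun_eq_card] at hrank
  rw [Module.natCard_eq_pow_finrank (K := F)]
  congr 1
  omega

theorem Submodule.natCard_le_pow_of_ne_top [Finite F] {V : Type*} [AddCommGroup V] [Module F V]
    [FiniteDimensional F V] {C : Submodule F V} (hC : C ≠ ⊤) :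
    Nat.card C ≤ Nat.card F ^ (Module.finrank F V - 1) := by
  rw [Module.natCard_eq_pow_finrank (K := F)]
  have := Submodule.finrank_lt hC
  exact Nat.pow_le_pow_right Nat.card_pos (by omega)

end Codes

/-- Let `F` be a finite field with `q` elements and `n ≥ 2`. The largest
cardinality of a linear code `C ⊆ F^n` all of whose nonzero codewords `c` satisfy
`binom(n, wt(c))·(q-1)^{wt(c)} ≥ n·(q-1)` (i.e. `ew(c) ≥ f_{q,n}(1)`) equals `2^{n-1}`
if `q = 2`, and equals `q^n` if `q ≥ 3`. -/
theorem largest_code_with_entropy_distance_f1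
    (F : Type*) [Field F] [Fintype F] [DecidableEq F] (q n : ℕ)
    (hq : Fintype.card F = q) (hn : 2 ≤ n) :
    (q = 2 → IsGreatest
      {m : ℕ | ∃ C : Submodule F (Fin n → F),
        (∀ c ∈ C, c ≠ 0 →
          n * (q - 1) ≤ n.choose (hammingNorm c) * (q - 1) ^ hammingNorm c) ∧
        Nat.card C = m}
      (2 ^ (n - 1))) ∧
    (3 ≤ q → IsGreatest
      {m : ℕ | ∃ C : Submodule F (Fin n → F),
        (∀ c ∈ C, c ≠ 0 →
          n * (q - 1) ≤ n.choose (hammingNorm c) * (q - 1) ^ hammingNorm c) ∧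
        Nat.card C = m}
      (q ^ n)) := by
  subst hq
  let i₀ : Fin n := ⟨0, by omega⟩
  constructor
  · intro hq2
    refine ⟨⟨LinearMap.ker (LinearMap.proj i₀), fun c hc hc0 => ?_, ?_⟩, ?_⟩
    · simpa using Nat.mul_le_choose_mul_pow _ (hammingNorm_pos_iff.2 hc0)
        (hammingNorm_lt_card_of_apply_eq_zero (i := i₀) hc)
    · simpa [hq2] using natCard_ker_proj (F := F) i₀
    · rintro _ ⟨C, hC, rfl⟩
      have hC_ne_top : C ≠ ⊤ := by
        rintro rfl
        have := hC (fun _ => 1) Submodule.mem_top fun h => one_ne_zero (congrFun h i₀)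
        simp [hammingNorm_const, hq2] at this
        omega
      simpa [hq2] using Submodule.natCard_le_pow_of_ne_top hC_ne_top
  · intro hq3
    refine ⟨⟨⊤, fun c _ hc0 => ?_, by simp⟩, ?_⟩
    · exact Nat.mul_le_choose_mul_pow_of_two_le (by omega) (hammingNorm_pos_iff.2 hc0)
        (by simpa using hammingNorm_le_card_fintype (x := c))
    · rintro _ ⟨C, -, rfl⟩
      simpa using Nat.card_le_card_of_injective _ (Subtype.val_injective (p := (· ∈ C)))
end

section
/- Let F be a finite field with q elements, n ≥ 1, and let 1 ≤ d₁ ≤ d₂ ≤ n be integers. If C ⊆ F^n is a linear code in which every nonzero codeword has Hamming weight in the interval [d₁, d₂], then |C| ≤ q^{min(n − d₁ + 1, d₂)}. -/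
/-!
A linear code `C ⊆ F^ι` has dimension at most `#S` as soon as its only codeword vanishing on the
coordinate set `S` is zero, since then restriction to `S` embeds `C` into `F^S`.
If all nonzero weights are at least `d₁`, any `n - d₁ + 1` coordinates form such a set: a codeword
vanishing there has weight at most `d₁ - 1`. If all nonzero weights are at most `d₂`, the support
`S` of a codeword `c` of maximal weight is such a set: a nonzero codeword `x` vanishing on `S`
would give the heavier codeword `c + x`, of weight `wt c + wt x`.
-/

section

open Finset Module

variable {ι F : Type*} [Fintype ι] [Field F]

theorem Submodule.finrank_le_card_of_eqOn_zero (C : Submodule F (ι → F)) (S : Finset ι)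
    (h : ∀ x ∈ C, Set.EqOn x 0 S → x = 0) : finrank F C ≤ #S := by
  let restrict : C →ₗ[F] (S → F) := (LinearMap.funLeft F F Subtype.val).comp C.subtype
  have hinj : Function.Injective restrict := by
    refine (injective_iff_map_eq_zero restrict).2 fun x hx => Subtype.ext (h x x.2 fun i hi => ?_)
    exact congrFun hx ⟨i, hi⟩
  simpa using LinearMap.finrank_le_finrank_of_injective hinj

variable [DecidableEq F]

theorem hammingNorm_le_card_sub_of_eqOn_zero {x : ι → F} {S : Finset ι}
    (hx : Set.EqOn x 0 S) : hammingNorm x ≤ Fintype.card ι - #S := by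
  classical
  rw [← card_compl]
  refine card_le_card fun i hi => mem_compl.2 fun hiS => ?_
  exact (mem_filter.1 hi).2 (hx hiS)

theorem hammingNorm_add_of_eqOn_zero {x y : ι → F}
    (hy : Set.EqOn y 0 {i | x i ≠ 0}) : hammingNorm (x + y) = hammingNorm x + hammingNorm y := by
  classical
  rw [hammingNorm, hammingNorm, hammingNorm, ← card_union_of_disjoint]
  · congr 1
    ext i
    by_cases hxi : x i = 0
    · simp [hxi]
    · simp [hxi, hy hxi]
  · exact disjoint_filter.2 fun i _ hxi hyi => hyi (hy hxi)

theorem Submodule.finrank_le_card_sub_of_le_hammingNorm (C : Submodule F (ι → F)) {d : ℕ}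
    (hC : ∀ c ∈ C, c ≠ 0 → d ≤ hammingNorm c) : finrank F C ≤ Fintype.card ι - d + 1 := by
  obtain ⟨S, -, hS⟩ := exists_subset_card_eq (s := (univ : Finset ι))
    (n := Fintype.card ι - (d - 1)) (by simp)
  have hvanish : ∀ x ∈ C, Set.EqOn x 0 S → x = 0 := by
    intro x hx hxS
    by_contra hx0
    have := hammingNorm_le_card_sub_of_eqOn_zero hxS
    have := hC x hx hx0
    have := hammingNorm_pos_iff.2 hx0
    omega
  have := C.finrank_le_card_of_eqOn_zero S hvanish
  omega

theorem Submodule.finrank_le_of_hammingNorm_le [Finite F] (C : Submodule F (ι → F)) {d : ℕ}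
    (hC : ∀ c ∈ C, c ≠ 0 → hammingNorm c ≤ d) : finrank F C ≤ d := by
  classical
  obtain ⟨c, hc_max⟩ := Finite.exists_max fun c : C => hammingNorm (c : ι → F)
  have hvanish : ∀ x ∈ C, Set.EqOn x 0 {i | (c : ι → F) i ≠ 0} → x = 0 := by
    intro x hx hxS
    have := hc_max ⟨_, C.add_mem c.2 hx⟩
    rw [hammingNorm_add_of_eqOn_zero hxS] at this
    exact hammingNorm_eq_zero.1 (by omega)
  refine (C.finrank_le_card_of_eqOn_zero {i | (c : ι → F) i ≠ 0} (by simpa using hvanish)).trans ?_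
  by_cases hc : (c : ι → F) = 0
  · simp [hc]
  · exact hC c c.2 hc

end

theorem singleton_bound_entropy_distance_general
    (F : Type*) [Field F] [Fintype F] [DecidableEq F] (q n d₁ d₂ : ℕ)
    (hq : Fintype.card F = q)
    (C : Submodule F (Fin n → F))
    (hC : ∀ c ∈ C, c ≠ 0 → d₁ ≤ hammingNorm c ∧ hammingNorm c ≤ d₂) :
    Nat.card C ≤ q ^ min (n - d₁ + 1) d₂ := by
  have hq_pos : 0 < q := hq ▸ Fintype.card_pos
  rw [Module.natCard_eq_pow_finrank (K := F), Nat.card_eq_fintype_card, hq]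
  refine Nat.pow_le_pow_right hq_pos (le_min ?_ ?_)
  · simpa using C.finrank_le_card_sub_of_le_hammingNorm fun c hc hc0 => (hC c hc hc0).1
  · exact C.finrank_le_of_hammingNorm_le fun c hc hc0 => (hC c hc hc0).2

/-- Singleton-type bound: Let `F` be a finite field with `q` elements,
`n ≥ 1`, and `1 ≤ d₁ ≤ d₂ ≤ n`. If `C ⊆ F^n` is a linear code in which every nonzero
codeword has Hamming weight in `[d₁, d₂]`, then `|C| ≤ q^{min(n − d₁ + 1, d₂)}`. -/
theorem singleton_bound_entropy_distance
    (F : Type*) [Field F] [Fintype F] [DecidableEq F] (q n d₁ d₂ : ℕ)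
    (hq : Fintype.card F = q) (hn : 1 ≤ n)
    (hd₁ : 1 ≤ d₁) (hd₁₂ : d₁ ≤ d₂) (hd₂ : d₂ ≤ n)
    (C : Submodule F (Fin n → F))
    (hC : ∀ c ∈ C, c ≠ 0 → d₁ ≤ hammingNorm c ∧ hammingNorm c ≤ d₂) :
    Nat.card C ≤ q ^ min (n - d₁ + 1) d₂ :=
  singleton_bound_entropy_distance_general F q n d₁ d₂ hq C hC
end

section
/- Let n ≥ 4. The largest cardinality of a binary linear code C ⊆ F_2^n in which every nonzero codeword has Hamming weight between 2 and n − 2 equals 2^{n-3} if n is odd, and equals 2^{n-2} if n is even. That is: (a) every such code satisfies the stated cardinality bound, and (b) there exists such a code attaining it. -/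
/-!
Adjoining the all-ones vector `1` to such a code `C` doubles it and creates no vector of weight
one, because the new words `c + 1` have weight `n - wt c`. So `C ⊔ ⟨1⟩` misses every unit vector
`e i`, and `dim C ≤ n - 2`. For odd `n` a further dimension is lost: some `e i₀ + e i` lies
outside `C ⊔ ⟨1⟩`, since otherwise the sum over all `i`, which is `e i₀ + 1`, would lie in it and
then so would `e i₀`. The bound is attained by the even-weight words supported on `n - 1`
(`n` even) or `n - 2` (`n` odd) coordinates.
-/

open Finset Module Submodule

lemma Submodule.mem_sup_span_singleton_iff_of_zmod_two {V : Type*} [AddCommGroup V]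
    [Module (ZMod 2) V] {S : Submodule (ZMod 2) V} {v x : V} :
    x ∈ S ⊔ span (ZMod 2) {v} ↔ x ∈ S ∨ x + v ∈ S := by
  have hvv : v + v = 0 := by rw [← two_smul (ZMod 2) v]; exact zero_smul _ v
  simp only [mem_sup, mem_span_singleton]
  constructor
  · rintro ⟨s, hs, _, ⟨a, rfl⟩, rfl⟩
    obtain rfl | rfl : a = 0 ∨ a = 1 := by revert a; decide
    · left; simpa using hs
    · right; simpa [add_assoc, hvv] using hs
  · rintro (hx | hx)
    · exact ⟨x, hx, 0, ⟨0, zero_smul _ _⟩, add_zero x⟩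
    · exact ⟨x + v, hx, v, ⟨1, one_smul _ _⟩, by rw [add_assoc, hvv, add_zero]⟩

section Hamming

variable {ι : Type*} [Fintype ι]

lemma hammingNorm_add_one (x : ι → ZMod 2) :
    hammingNorm (x + 1) = Fintype.card ι - hammingNorm x := by
  have hflip : ∀ a : ZMod 2, a + 1 ≠ 0 ↔ ¬a ≠ 0 := by decide
  have := card_filter_add_card_filter_not (s := univ) (fun i => x i ≠ 0)
  simp only [hammingNorm, Pi.add_apply, Pi.one_apply, hflip, card_univ] at this ⊢
  omega

lemma hammingNorm_single [DecidableEq ι] {β : ι → Type*} [∀ i, Zero (β i)]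
    [∀ i, DecidableEq (β i)] (i : ι) {b : β i} (hb : b ≠ 0) :
    hammingNorm (Pi.single i b) = 1 := by
  rw [hammingNorm, card_eq_one]
  refine ⟨i, ?_⟩
  ext j
  by_cases h : j = i
  · subst h; simp [hb]
  · simp [h]

lemma natCast_hammingNorm (x : ι → ZMod 2) : (hammingNorm x : ZMod 2) = ∑ i, x i := by
  have hx : ∀ i, x i = if x i ≠ 0 then 1 else 0 := fun i => by
    generalize x i = a; revert a; decide
  rw [sum_congr rfl fun i _ => hx i, sum_boole, hammingNorm]

end Hamming

section UpperBound

variable {ι : Type*} [Fintype ι]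

lemma notMem_of_hammingNorm_eq_one_or_ge {C : Submodule (ZMod 2) (ι → ZMod 2)}
    (hn : 2 ≤ Fintype.card ι)
    (hC : ∀ c ∈ C, c ≠ 0 → 2 ≤ hammingNorm c ∧ hammingNorm c ≤ Fintype.card ι - 2)
    {x : ι → ZMod 2} (hx : hammingNorm x = 1 ∨ Fintype.card ι - 1 ≤ hammingNorm x) : x ∉ C :=
  fun hmem => by
    have := hC x hmem (hammingNorm_ne_zero_iff.mp (by omega))
    omega

variable [DecidableEq ι]

lemma exists_single_add_single_notMem (hodd : Odd (Fintype.card ι))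
    {D : Submodule (ZMod 2) (ι → ZMod 2)} (hone : 1 ∈ D) {i₀ : ι}
    (hi₀ : Pi.single i₀ 1 ∉ D) :
    ∃ i, Pi.single i₀ 1 + Pi.single i (1 : ZMod 2) ∉ D := by
  by_contra! h
  have hsum : ∑ i, (Pi.single i₀ (1 : ZMod 2) + Pi.single i 1) =
      (Pi.single i₀ 1 + 1 : ι → ZMod 2) := by
    rw [sum_add_distrib, sum_const, card_univ, ← Nat.cast_smul_eq_nsmul (ZMod 2),
      hodd.natCast_zmod_two, one_smul]
    congr 1
    ext j
    simp [Finset.sum_apply, Pi.single_apply]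
  have hmem : Pi.single i₀ 1 + 1 ∈ D := hsum ▸ D.sum_mem fun i _ => h i
  exact hi₀ (by simpa using D.sub_mem hmem hone)

lemma single_notMem_sup_span_one {C : Submodule (ZMod 2) (ι → ZMod 2)}
    (hn : 2 ≤ Fintype.card ι)
    (hC : ∀ c ∈ C, c ≠ 0 → 2 ≤ hammingNorm c ∧ hammingNorm c ≤ Fintype.card ι - 2) (i : ι) :
    Pi.single i 1 ∉ C ⊔ span (ZMod 2) {1} := by
  have h := hammingNorm_single (β := fun _ => ZMod 2) i one_ne_zero
  rw [mem_sup_span_singleton_iff_of_zmod_two, not_or]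
  exact ⟨notMem_of_hammingNorm_eq_one_or_ge hn hC (.inl h),
    notMem_of_hammingNorm_eq_one_or_ge hn hC (.inr (by rw [hammingNorm_add_one, h]))⟩

theorem finrank_le_of_weights_between_two_and_card_sub_two (C : Submodule (ZMod 2) (ι → ZMod 2))
    (hn : 2 ≤ Fintype.card ι)
    (hC : ∀ c ∈ C, c ≠ 0 → 2 ≤ hammingNorm c ∧ hammingNorm c ≤ Fintype.card ι - 2) :
    finrank (ZMod 2) C ≤
      if Odd (Fintype.card ι) then Fintype.card ι - 3 else Fintype.card ι - 2 := by
  have hone : (1 : ι → ZMod 2) ∉ C := notMem_of_hammingNorm_eq_one_or_ge hn hC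
    (.inr (by
      have := hammingNorm_add_one (0 : ι → ZMod 2)
      rw [zero_add, hammingNorm_zero] at this
      omega))
  obtain ⟨i₀⟩ : Nonempty ι := Fintype.card_pos_iff.mp (by omega)
  set D := C ⊔ span (ZMod 2) {(1 : ι → ZMod 2)}
  have hi₀ : Pi.single i₀ 1 ∉ D := single_notMem_sup_span_one hn hC i₀
  set D₁ := D ⊔ span (ZMod 2) {Pi.single i₀ (1 : ZMod 2)}
  have hD : finrank (ZMod 2) D₁ = finrank (ZMod 2) C + 2 := by
    rw [finrank_sup_span_singleton hi₀, finrank_sup_span_singleton hone]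
  split_ifs with hodd
  · obtain ⟨i, hi⟩ :=
      exists_single_add_single_notMem hodd (mem_sup_right (mem_span_singleton_self 1)) hi₀
    have hi' : Pi.single i 1 ∉ D₁ := by
      rw [mem_sup_span_singleton_iff_of_zmod_two, add_comm, not_or]
      exact ⟨single_notMem_sup_span_one hn hC i, hi⟩
    have := (D₁ ⊔ span (ZMod 2) {Pi.single i 1}).finrank_le
    rw [finrank_sup_span_singleton hi', hD, finrank_fintype_fun_eq_card] at this
    omega
  · have := D₁.finrank_le
    rw [hD, finrank_fintype_fun_eq_card] at this
    omega

end UpperBound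

section EvenCode

variable {ι : Type*} [Fintype ι]

def evenCodeOn (S : Finset ι) : Submodule (ZMod 2) (ι → ZMod 2) where
  carrier := {x | (∀ i ∉ S, x i = 0) ∧ ∑ i, x i = 0}
  add_mem' := fun ⟨hx, hx'⟩ ⟨hy, hy'⟩ =>
    ⟨fun i hi => by simp [hx i hi, hy i hi], by simp [sum_add_distrib, hx', hy']⟩
  zero_mem' := ⟨fun _ _ => rfl, by simp⟩
  smul_mem' := fun a _ ⟨hx, hx'⟩ => ⟨fun i hi => by simp [hx i hi], by simp [← mul_sum, hx']⟩

lemma hammingNorm_bounds_of_mem_evenCodeOn {S : Finset ι} {x : ι → ZMod 2}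
    (hx : x ∈ evenCodeOn S) (hx₀ : x ≠ 0) : 2 ≤ hammingNorm x ∧ hammingNorm x ≤ 2 * (#S / 2) := by
  obtain ⟨hsupp, hsum⟩ := hx
  have heven : Even (hammingNorm x) := by
    rw [← ZMod.natCast_eq_zero_iff_even, natCast_hammingNorm, hsum]
  have hle : hammingNorm x ≤ #S := card_le_card fun i hi => by
    by_contra h
    exact (mem_filter.mp hi).2 (hsupp i h)
  have hpos := hammingNorm_pos_iff.mpr hx₀
  obtain ⟨r, hr⟩ := heven
  omega

theorem card_sub_one_le_finrank_evenCodeOn [DecidableEq ι] (S : Finset ι) :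
    #S - 1 ≤ finrank (ZMod 2) (evenCodeOn S) := by
  rcases S.eq_empty_or_nonempty with rfl | ⟨p, hp⟩
  · simp
  let v : S.erase p → (ι → ZMod 2) := fun i => Pi.single (i : ι) 1 + Pi.single p 1
  have hv : LinearIndependent (ZMod 2) v := by
    rw [Fintype.linearIndependent_iff]
    intro g hg i
    have hgi := congrFun hg i
    simp only [v, Finset.sum_apply, Pi.smul_apply, Pi.add_apply, Pi.zero_apply, smul_eq_mul,
      Pi.single_apply, if_neg (ne_of_mem_erase i.2), add_zero, mul_ite, mul_one, mul_zero] at hgi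
    simpa only [← Subtype.ext_iff, sum_ite_eq, mem_univ, if_true] using hgi
  have hspan : span (ZMod 2) (Set.range v) ≤ evenCodeOn S := by
    rw [span_le]
    rintro _ ⟨i, rfl⟩
    refine ⟨fun j hj => ?_, ?_⟩
    · simp [v, (ne_of_mem_of_not_mem (mem_of_mem_erase i.2) hj).symm,
        (ne_of_mem_of_not_mem hp hj).symm]
    · simp [v, sum_add_distrib]
      decide
  calc #S - 1 = finrank (ZMod 2) (span (ZMod 2) (Set.range v)) := by
        rw [finrank_span_eq_card hv, Fintype.card_coe, card_erase_of_mem hp]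
    _ ≤ finrank (ZMod 2) (evenCodeOn S) := Submodule.finrank_mono hspan

end EvenCode

/-- Let `n ≥ 4`. The largest cardinality of a binary linear code
`C ⊆ F₂^n` in which every nonzero codeword has Hamming weight between `2` and `n − 2`
equals `2^{n-3}` if `n` is odd, and `2^{n-2}` if `n` is even. -/
theorem largest_binary_code_with_weights_between_two_and_n_sub_two
    (n : ℕ) (hn : 4 ≤ n) :
    IsGreatest
      {m : ℕ | ∃ C : Submodule (ZMod 2) (Fin n → ZMod 2),
        (∀ c ∈ C, c ≠ 0 → 2 ≤ hammingNorm c ∧ hammingNorm c ≤ n - 2) ∧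
        Nat.card C = m}
      (if Odd n then 2 ^ (n - 3) else 2 ^ (n - 2)) := by
  have hupper : ∀ C : Submodule (ZMod 2) (Fin n → ZMod 2),
      (∀ c ∈ C, c ≠ 0 → 2 ≤ hammingNorm c ∧ hammingNorm c ≤ n - 2) →
        finrank (ZMod 2) C ≤ if Odd n then n - 3 else n - 2 := fun C hC => by
    simpa using finrank_le_of_weights_between_two_and_card_sub_two C (by simp; omega)
      (by simpa using hC)
  have hcard : ∀ C : Submodule (ZMod 2) (Fin n → ZMod 2), Nat.card C = 2 ^ finrank (ZMod 2) C :=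
    fun C => by rw [natCard_eq_pow_finrank (K := ZMod 2), Nat.card_zmod]
  rw [← apply_ite (2 ^ ·)]
  generalize hk : (if Odd n then n - 3 else n - 2) = k at hupper
  refine ⟨?_, fun _ ⟨C, hC, hm⟩ => hm ▸ hcard C ▸ Nat.pow_le_pow_right two_pos (hupper C hC)⟩
  let S : Finset (Fin n) := Iic ⟨k, by split_ifs at hk <;> omega⟩
  have hS : #S = k + 1 := Fin.card_Iic _
  have hweights : ∀ c ∈ evenCodeOn S, c ≠ 0 → 2 ≤ hammingNorm c ∧ hammingNorm c ≤ n - 2 :=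
    fun c hc hc₀ => by
      have := hammingNorm_bounds_of_mem_evenCodeOn hc hc₀
      rw [hS] at this
      split_ifs at hk with hodd <;> rw [Nat.odd_iff] at hodd <;> omega
  refine ⟨evenCodeOn S, hweights, ?_⟩
  have := card_sub_one_le_finrank_evenCodeOn S
  rw [hcard, le_antisymm (hupper _ hweights) (by omega)]
end

section
/- Let F be a finite field with q elements, k ≥ 1, n ≥ 1, and let f : F^k → F^n be a linear map of full rank (rank(f) = min(k,n)). If q = 2, then there exists a nonzero x ∈ F^k with ew_k(x) + ew_n(f(x)) ≤ log_2(binom(n, ⌈(n−1)/2⌉)). If q ≥ 3, then there exists a nonzero x ∈ F^k with ew_k(x) + ew_n(f(x)) ≤ log_q(k·(q-1)) + log_q(binom(n, m)·(q-1)^m), where m = ⌈((q-1)·n − 1)/q⌉. -/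
/-!
For `q = 2` the all-ones vector has entropy weight `log₂ 1 = 0`; for `q ≥ 3` a unit vector has
entropy weight `log_q (k (q - 1))`. In both cases the entropy weight of `f x` is at most
`max_w log_q (C(n, w) (q - 1)^w)`. Since
`C(n, w + 1) (q - 1)^(w + 1) (w + 1) = C(n, w) (q - 1)^w (n - w) (q - 1)`, the terms increase while
`q w + 1 < (q - 1) n` and decrease afterwards, so the maximum sits at `⌈((q - 1) n - 1) / q⌉`.
-/

theorem apply_le_apply_of_le_succ_of_succ_le {β : Type*} [Preorder β] {f : ℕ → β} {m : ℕ}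
    (hup : ∀ a < m, f a ≤ f (a + 1)) (hdown : ∀ a ≥ m, f (a + 1) ≤ f a) (w : ℕ) :
    f w ≤ f m := by
  rcases le_total w m with hwm | hmw
  · refine monotoneOn_of_le_add_one Set.ordConnected_Iic (fun a _ _ ha ↦ hup a ?_)
      (Set.mem_Iic.2 hwm) (Set.mem_Iic.2 le_rfl) hwm
    exact Nat.lt_of_succ_le ha
  · exact antitoneOn_of_add_one_le Set.ordConnected_Ici (fun a _ ha _ ↦ hdown a ha)
      (Set.mem_Ici.2 le_rfl) (Set.mem_Ici.2 hmw) hmw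

theorem Nat.choose_succ_mul_pow_succ_mul (n a r : ℕ) :
    n.choose (a + 1) * r ^ (a + 1) * (a + 1) = n.choose a * r ^ a * ((n - a) * r) := by
  rw [mul_right_comm, Nat.choose_succ_right_eq, pow_succ]
  ring

theorem Nat.choose_mul_pow_le_succ {n a r : ℕ} (h : a + 1 ≤ (n - a) * r) :
    n.choose a * r ^ a ≤ n.choose (a + 1) * r ^ (a + 1) :=
  Nat.le_of_mul_le_mul_right (by rw [Nat.choose_succ_mul_pow_succ_mul]; gcongr) a.succ_pos

theorem Nat.choose_succ_mul_pow_succ_le {n a r : ℕ} (h : (n - a) * r ≤ a + 1) :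
    n.choose (a + 1) * r ^ (a + 1) ≤ n.choose a * r ^ a :=
  Nat.le_of_mul_le_mul_right (by rw [Nat.choose_succ_mul_pow_succ_mul]; gcongr) a.succ_pos

theorem Nat.lt_ceil_div_succ_iff (n r a : ℕ) :
    a < ⌈((r : ℝ) * n - 1) / (r + 1)⌉₊ ↔ (r + 1) * a + 1 < r * n := by
  rw [Nat.lt_ceil, lt_div_iff₀ (by positivity), ← Nat.cast_lt (α := ℝ)]
  push_cast
  constructor <;> intro h <;> linarith

theorem Nat.choose_mul_pow_le_choose_mul_pow_mode (n r w : ℕ) :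
    n.choose w * r ^ w ≤
      n.choose ⌈((r : ℝ) * n - 1) / (r + 1)⌉₊ * r ^ ⌈((r : ℝ) * n - 1) / (r + 1)⌉₊ := by
  refine apply_le_apply_of_le_succ_of_succ_le (f := fun a ↦ n.choose a * r ^ a)
    (fun a ha ↦ Nat.choose_mul_pow_le_succ ?_) (fun a ha ↦ Nat.choose_succ_mul_pow_succ_le ?_) w
  · have h := (Nat.lt_ceil_div_succ_iff n r a).1 ha
    rw [Nat.sub_mul]; ring_nf at h ⊢; omega
  · have h := not_lt.1 <| (Nat.lt_ceil_div_succ_iff n r a).not.1 (not_lt.2 ha)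
    rw [Nat.sub_mul]; ring_nf at h ⊢; omega

theorem logb_choose_mul_pow_le_mode {q : ℕ} (hq : 2 ≤ q) {n w : ℕ} (hw : w ≤ n) :
    Real.logb q ((n.choose w * (q - 1) ^ w : ℕ) : ℝ) ≤
      Real.logb q ((n.choose ⌈(((q : ℝ) - 1) * n - 1) / q⌉₊ *
        (q - 1) ^ ⌈(((q : ℝ) - 1) * n - 1) / q⌉₊ : ℕ) : ℝ) := by
  obtain ⟨r, rfl⟩ : ∃ r, q = r + 1 := ⟨q - 1, by omega⟩
  have hpos : 0 < n.choose w * r ^ w := Nat.mul_pos (Nat.choose_pos hw) (pow_pos (by omega) w)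
  refine Real.logb_le_logb_of_le (by exact_mod_cast hq) (by exact_mod_cast hpos) ?_
  simpa using (Nat.cast_le (α := ℝ)).2 (Nat.choose_mul_pow_le_choose_mul_pow_mode n r w)

theorem encoder_entropy_distance_upper_bound_general
    (F : Type*) [Field F] [DecidableEq F] (q k n : ℕ)
    (hk : 1 ≤ k)
    (f : (Fin k → F) →ₗ[F] (Fin n → F)) :
    (q = 2 → ∃ x : Fin k → F, x ≠ 0 ∧
      Real.logb q ((k.choose (hammingNorm x) * (q - 1) ^ hammingNorm x : ℕ) : ℝ) +
        Real.logb q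
          ((n.choose (hammingNorm (f x)) * (q - 1) ^ hammingNorm (f x) : ℕ) : ℝ) ≤
      Real.logb 2 ((n.choose ⌈((n : ℝ) - 1) / 2⌉₊ : ℕ) : ℝ)) ∧
    (3 ≤ q → ∃ x : Fin k → F, x ≠ 0 ∧
      Real.logb q ((k.choose (hammingNorm x) * (q - 1) ^ hammingNorm x : ℕ) : ℝ) +
        Real.logb q
          ((n.choose (hammingNorm (f x)) * (q - 1) ^ hammingNorm (f x) : ℕ) : ℝ) ≤
      Real.logb q ((k * (q - 1) : ℕ) : ℝ) +
        Real.logb q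
          ((n.choose ⌈(((q : ℝ) - 1) * n - 1) / q⌉₊ *
              (q - 1) ^ ⌈(((q : ℝ) - 1) * n - 1) / q⌉₊ : ℕ) : ℝ)) := by
  have i₀ : Fin k := ⟨0, hk⟩
  have hfx_le (x : Fin k → F) : hammingNorm (f x) ≤ n := by
    simpa using hammingNorm_le_card_fintype (x := f x)
  constructor
  · rintro rfl
    refine ⟨fun _ ↦ 1, Function.ne_iff.2 ⟨i₀, one_ne_zero⟩, ?_⟩
    have hone : hammingNorm (fun _ : Fin k ↦ (1 : F)) = k := by simp [hammingNorm]
    simpa [hone, show (2 : ℝ) - 1 = 1 by norm_num] using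
      logb_choose_mul_pow_le_mode le_rfl (hfx_le fun _ ↦ 1)
  · intro hq
    refine ⟨Pi.single i₀ 1, by simp, ?_⟩
    have hsingle : hammingNorm (Pi.single i₀ 1 : Fin k → F) = 1 := by
      simp [hammingNorm, Pi.single_apply, Finset.filter_eq']
    rw [hsingle, Nat.choose_one_right, pow_one]
    linarith [logb_choose_mul_pow_le_mode (show 2 ≤ q by omega)
      (hfx_le (Pi.single i₀ 1 : Fin k → F))]

/-- upper bound on the entropy distance of a linear encoder:
Let `F` be a finite field with `q` elements, `k ≥ 1`, `n ≥ 1`, and let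
`f : F^k → F^n` be a linear map of full rank (`rank(f) = min(k,n)`). If `q = 2`, then
some nonzero `x ∈ F^k` has `ew_k(x) + ew_n(f(x)) ≤ log_2(binom(n, ⌈(n−1)/2⌉))`. If
`q ≥ 3`, then some nonzero `x ∈ F^k` has
`ew_k(x) + ew_n(f(x)) ≤ log_q(k·(q-1)) + log_q(binom(n,m)·(q-1)^m)` where
`m = ⌈((q-1)·n − 1)/q⌉`. Here `ew_m(x) = log_q(binom(m, wt(x))·(q-1)^{wt(x)})`. -/
theorem encoder_entropy_distance_upper_bound
    (F : Type*) [Field F] [Fintype F] [DecidableEq F] (q k n : ℕ)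
    (hq : Fintype.card F = q) (hk : 1 ≤ k) (hn : 1 ≤ n)
    (f : (Fin k → F) →ₗ[F] (Fin n → F))
    (hf : Module.finrank F (LinearMap.range f) = min k n) :
    (q = 2 → ∃ x : Fin k → F, x ≠ 0 ∧
      Real.logb q ((k.choose (hammingNorm x) * (q - 1) ^ hammingNorm x : ℕ) : ℝ) +
        Real.logb q
          ((n.choose (hammingNorm (f x)) * (q - 1) ^ hammingNorm (f x) : ℕ) : ℝ) ≤
      Real.logb 2 ((n.choose ⌈((n : ℝ) - 1) / 2⌉₊ : ℕ) : ℝ)) ∧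
    (3 ≤ q → ∃ x : Fin k → F, x ≠ 0 ∧
      Real.logb q ((k.choose (hammingNorm x) * (q - 1) ^ hammingNorm x : ℕ) : ℝ) +
        Real.logb q
          ((n.choose (hammingNorm (f x)) * (q - 1) ^ hammingNorm (f x) : ℕ) : ℝ) ≤
      Real.logb q ((k * (q - 1) : ℕ) : ℝ) +
        Real.logb q
          ((n.choose ⌈(((q : ℝ) - 1) * n - 1) / q⌉₊ *
              (q - 1) ^ ⌈(((q : ℝ) - 1) * n - 1) / q⌉₊ : ℕ) : ℝ)) :=
  encoder_entropy_distance_upper_bound_general F q k n hk f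
end

section
/- Let F be a finite field with q elements, k ≥ 1, n ≥ 1, k′ = min(k,n), and let h be a real number such that Σ binom(k,i)·binom(n,j)·(q-1)^{i+j} < (q-1)·(q^n − q^{k′−1}), where the sum ranges over pairs (i,j) with 1 ≤ i ≤ k, j₀ ≤ j ≤ n (j₀ = 1 if k ≤ n and j₀ = 0 if k > n), and log_q(binom(k,i)(q-1)^i) + log_q(binom(n,j)(q-1)^j) < h. Then there exists a full-rank linear map f : F^k → F^n such that every nonzero x ∈ F^k satisfies ew_k(x) + ew_n(f(x)) ≥ h. -/
/-!
Probabilistic method, by double counting. The group `GL(F^k) × GL(F^n)` permutes the full-rank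
maps and acts transitively on pairs of nonzero vectors, so for fixed `x ≠ 0` the number of
full-rank `f` with `f x = y` is the same for every `y ≠ 0`; it is no larger for `y = 0` (possible
only when `n < k`). Hence at most a `1 / (q^n - 1)` fraction of the full-rank maps send `x` to a
given admissible `y`. Call `f` bad if its graph meets the set `B` of pairs `(x, y)` whose weights
have total entropy weight below `h`. As `B` is stable under nonzero scalars, a bad graph meets it
at least `q - 1` times, so the bad maps form at most a `#B / ((q - 1)(q^n - 1))` fraction of the
full-rank maps. Counting `B` by weights bounds `#B` by the sum in the hypothesis, which is less
than `(q - 1)(q^n - 1)`.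
-/

open Finset Module

section HammingWeight

variable {ι κ β : Type*} [Fintype ι] [DecidableEq ι] [Fintype κ] [DecidableEq κ]
  [Fintype β] [DecidableEq β] [Zero β]

theorem card_hammingNorm_eq_le (i : ℕ) :
    #{x : ι → β | hammingNorm x = i} ≤
      (Fintype.card ι).choose i * (Fintype.card β - 1) ^ i := by
  let vectorsWithSupport (s : Finset ι) : Finset (ι → β) :=
    Fintype.piFinset fun j => if j ∈ s then univ.erase 0 else {0}
  have hsub : ({x : ι → β | hammingNorm x = i} : Finset _) ⊆
      (powersetCard i univ).biUnion vectorsWithSupport := by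
    intro x hx
    rw [mem_filter_univ] at hx
    simp only [vectorsWithSupport, mem_biUnion, mem_powersetCard, Fintype.mem_piFinset]
    refine ⟨({j | x j ≠ 0} : Finset ι), ⟨subset_univ _, hx⟩, fun j => ?_⟩
    by_cases hj : x j = 0 <;> simp [hj]
  have hcard : ∀ s ∈ powersetCard i (univ : Finset ι),
      #(vectorsWithSupport s) = (Fintype.card β - 1) ^ i := by
    intro s hs
    rw [Fintype.card_piFinset, ← (mem_powersetCard.1 hs).2, ← prod_const]
    simp [apply_ite card]
  calc _ ≤ _ := card_le_card hsub
    _ ≤ ∑ s ∈ powersetCard i univ, #(vectorsWithSupport s) := card_biUnion_le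
    _ = _ := by rw [sum_congr rfl hcard, sum_const, card_powersetCard, card_univ, smul_eq_mul]

theorem card_filter_hammingNorm_pair_le (Q : ℕ × ℕ → Prop) [DecidablePred Q] :
    #{b : (ι → β) × (κ → β) | Q (hammingNorm b.1, hammingNorm b.2)} ≤
      ∑ p ∈ (range (Fintype.card ι + 1) ×ˢ range (Fintype.card κ + 1)).filter Q,
        (Fintype.card ι).choose p.1 * (Fintype.card κ).choose p.2 *
          (Fintype.card β - 1) ^ (p.1 + p.2) := by
  rw [card_eq_sum_card_fiberwise (f := fun b => (hammingNorm b.1, hammingNorm b.2))]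
  · refine sum_le_sum fun p _ => ?_
    calc _ ≤ #(({x : ι → β | hammingNorm x = p.1} : Finset _) ×ˢ
            ({y : κ → β | hammingNorm y = p.2} : Finset _)) := by
          refine card_le_card fun b hb => ?_
          rw [mem_filter] at hb
          simp [← hb.2]
      _ ≤ _ := by
          rw [card_product, pow_add, mul_mul_mul_comm]
          exact Nat.mul_le_mul (card_hammingNorm_eq_le _) (card_hammingNorm_eq_le _)
  · intro b hb
    simp only [coe_filter, mem_univ, true_and, Set.mem_ofPred_eq] at hb
    simp only [coe_filter, mem_product, mem_range, Set.mem_ofPred_eq]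
    exact ⟨⟨Nat.lt_succ_of_le hammingNorm_le_card_fintype,
      Nat.lt_succ_of_le hammingNorm_le_card_fintype⟩, hb⟩

end HammingWeight

theorem exists_linearEquiv_apply_eq {K V : Type*} [Field K] [AddCommGroup V] [Module K V]
    {x y : V} (hx : x ≠ 0) (hy : y ≠ 0) : ∃ e : V ≃ₗ[K] V, e x = y := by
  obtain ⟨e, he⟩ := Submodule.exists_linearEquiv_restrict_eq
    (LinearEquiv.coord K V x hx ≪≫ₗ LinearEquiv.toSpanNonzeroSingleton K V y hy)
  refine ⟨e, (he ⟨x, Submodule.mem_span_singleton_self x⟩).symm.trans ?_⟩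
  simp [LinearEquiv.coord_self]

namespace LinearMap

variable {K V W V' W' : Type*} [Field K] [AddCommGroup V] [Module K V] [AddCommGroup W]
  [Module K W] [AddCommGroup V'] [Module K V'] [AddCommGroup W'] [Module K W']

def IsFullRank (f : V →ₗ[K] W) : Prop :=
  finrank K (range f) = min (finrank K V) (finrank K W)

theorem isFullRank_equiv_comp_comp_equiv_iff (g : W ≃ₗ[K] W') (f : V →ₗ[K] W)
    (e : V' ≃ₗ[K] V) :
    IsFullRank (g.toLinearMap ∘ₗ f ∘ₗ e.toLinearMap) ↔ IsFullRank f := by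
  rw [IsFullRank, IsFullRank, range_comp, range_comp_of_range_eq_top f e.range,
    g.finrank_map_eq, e.finrank_eq, g.finrank_eq]

theorem isFullRank_iff_injective [FiniteDimensional K V] {f : V →ₗ[K] W}
    (h : finrank K V ≤ finrank K W) : IsFullRank f ↔ Function.Injective f := by
  rw [IsFullRank, min_eq_left h, ← ker_eq_bot, ← Submodule.finrank_eq_zero,
    ← f.finrank_range_add_finrank_ker]
  omega

theorem isFullRank_iff_range_eq_top [FiniteDimensional K W] {f : V →ₗ[K] W}
    (h : finrank K W ≤ finrank K V) : IsFullRank f ↔ range f = ⊤ := by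
  rw [IsFullRank, min_eq_right h, Submodule.eq_top_iff_finrank_eq]

theorem exists_isFullRank_fin (k n : ℕ) :
    ∃ f : (Fin k → K) →ₗ[K] (Fin n → K), IsFullRank f := by
  rcases le_total k n with hkn | hnk
  · refine ⟨Function.ExtendByZero.linearMap K (Fin.castLE hkn), ?_⟩
    rw [isFullRank_iff_injective (by simpa using hkn)]
    exact Function.extend_injective (Fin.castLE_injective hkn) 0
  · refine ⟨funLeft K K (Fin.castLE hnk), ?_⟩
    rw [isFullRank_iff_range_eq_top (by simpa using hnk), range_eq_top]
    exact funLeft_surjective_of_injective K K _ (Fin.castLE_injective hnk)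

theorem exists_isFullRank [FiniteDimensional K V] [FiniteDimensional K W] :
    ∃ f : V →ₗ[K] W, IsFullRank f := by
  obtain ⟨f, hf⟩ := exists_isFullRank_fin (K := K) (finrank K V) (finrank K W)
  let eV := (finBasis K V).equivFun
  let eW := (finBasis K W).equivFun
  exact ⟨eW.symm.toLinearMap ∘ₗ f ∘ₗ eV.toLinearMap,
    (isFullRank_equiv_comp_comp_equiv_iff _ _ _).2 (by simpa [IsFullRank] using hf)⟩

theorem sub_one_mul_card_filter_exists_apply_eq_le [Fintype K] [DecidableEq V] [DecidableEq W]
    (S : Finset (V →ₗ[K] W)) (B : Finset (V × W)) (hB₀ : ∀ b ∈ B, b.1 ≠ 0)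
    (hB_smul : ∀ b ∈ B, ∀ c : K, c ≠ 0 → c • b ∈ B) :
    (Fintype.card K - 1) * #{f ∈ S | ∃ b ∈ B, f b.1 = b.2} ≤
      ∑ b ∈ B, #{f ∈ S | f b.1 = b.2} := by
  classical
  calc _ = ∑ f ∈ S with ∃ b ∈ B, f b.1 = b.2, (Fintype.card K - 1) := by
        rw [sum_const, smul_eq_mul, mul_comm]
    _ ≤ ∑ f ∈ S with ∃ b ∈ B, f b.1 = b.2,
          #(B.bipartiteAbove (fun f b => f b.1 = b.2) f) := by
        refine sum_le_sum fun f hf => ?_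
        obtain ⟨b, hb, hfb⟩ := (mem_filter.1 hf).2
        rw [← card_univ, ← card_erase_of_mem (mem_univ 0)]
        refine card_le_card_of_injOn (· • b) (fun c hc => ?_) fun c _ c' _ hcc' => ?_
        · have hc : c ≠ 0 := (mem_erase.1 (mem_coe.1 hc)).1
          simp [bipartiteAbove, hB_smul b hb c hc, hfb]
        · exact smul_left_injective K (hB₀ b hb) (congrArg Prod.fst hcc')
    _ ≤ ∑ f ∈ S, #(B.bipartiteAbove (fun f b => f b.1 = b.2) f) :=
        sum_le_sum_of_subset (filter_subset _ _)
    _ = _ := sum_card_bipartiteAbove_eq_sum_card_bipartiteBelow _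

section Fibers

variable [Fintype (V →ₗ[K] W)] [DecidablePred (IsFullRank (K := K) (V := V) (W := W))]
  [DecidableEq W]

theorem card_isFullRank_apply_eq_eq {x x' : V} {y y' : W} (hx : x ≠ 0) (hx' : x' ≠ 0)
    (hy : y ≠ 0) (hy' : y' ≠ 0) :
    #{f : V →ₗ[K] W | IsFullRank f ∧ f x = y} =
      #{f : V →ₗ[K] W | IsFullRank f ∧ f x' = y'} := by
  obtain ⟨e, he⟩ := exists_linearEquiv_apply_eq (K := K) hx hx'
  obtain ⟨g, hg⟩ := exists_linearEquiv_apply_eq (K := K) hy hy'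
  refine card_equiv (e.arrowCongr g).toEquiv fun f => ?_
  simp only [mem_filter_univ, LinearEquiv.coe_toEquiv]
  refine and_congr (isFullRank_equiv_comp_comp_equiv_iff g f e.symm).symm ?_
  rw [LinearEquiv.arrowCongr_apply, ← he, e.symm_apply_apply, ← hg, g.injective.eq_iff]

variable [FiniteDimensional K W]

theorem card_isFullRank_apply_eq_zero_le (hWV : finrank K W < finrank K V) {x : V} (hx : x ≠ 0)
    (y : W) :
    #{f : V →ₗ[K] W | IsFullRank f ∧ f x = 0} ≤
      #{f : V →ₗ[K] W | IsFullRank f ∧ f x = y} := by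
  obtain ⟨φ, hφ⟩ := Projective.exists_dual_eq_one K hx
  refine card_le_card_of_injOn (· + φ.smulRight y) (fun f hf => ?_) (add_left_injective _).injOn
  simp only [coe_filter, mem_univ, true_and, Set.mem_ofPred_eq] at hf ⊢
  obtain ⟨hf, hfx⟩ := hf
  rw [isFullRank_iff_range_eq_top hWV.le] at hf ⊢
  refine ⟨eq_top_iff.2 fun w _ => ?_, by simp [hfx, hφ]⟩
  obtain ⟨z, rfl⟩ := range_eq_top.1 hf w
  -- `f` and `f + φ(·) y` agree on `ker φ`, and `f` maps `ker φ` onto `W` because `f x = 0`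
  exact ⟨z - φ z • x, by simp [hfx, hφ]⟩

theorem sub_one_mul_card_isFullRank_apply_eq_le [Fintype W] {x : V} (hx : x ≠ 0) {y : W}
    (hy : finrank K V ≤ finrank K W → y ≠ 0) :
    (Fintype.card W - 1) * #{f : V →ₗ[K] W | IsFullRank f ∧ f x = y} ≤
      #{f : V →ₗ[K] W | IsFullRank f} := by
  have hle : ∀ y' ≠ 0, #{f : V →ₗ[K] W | IsFullRank f ∧ f x = y} ≤
      #{f : V →ₗ[K] W | IsFullRank f ∧ f x = y'} := by
    intro y' hy'
    by_cases hy0 : y = 0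
    · subst hy0
      exact card_isFullRank_apply_eq_zero_le (not_le.1 fun h => hy h rfl) hx y'
    · exact (card_isFullRank_apply_eq_eq hx hx hy0 hy').le
  calc _ = ∑ y' ∈ univ.erase 0, #{f : V →ₗ[K] W | IsFullRank f ∧ f x = y} := by
        rw [sum_const, card_erase_of_mem (mem_univ _), card_univ, smul_eq_mul]
    _ ≤ ∑ y' ∈ univ.erase 0, #{f : V →ₗ[K] W | IsFullRank f ∧ f x = y'} :=
        sum_le_sum fun y' hy' => hle y' (ne_of_mem_erase hy')
    _ ≤ ∑ y', #{f ∈ {f : V →ₗ[K] W | IsFullRank f} | f x = y'} := by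
        simp only [filter_filter]
        exact sum_le_sum_of_subset (erase_subset _ _)
    _ = _ := (card_eq_sum_card_fiberwise fun _ _ => mem_univ _).symm

theorem exists_isFullRank_forall_apply_ne [FiniteDimensional K V] [Fintype K] [Fintype W]
    [DecidableEq V] (B : Finset (V × W)) (hB₀ : ∀ b ∈ B, b.1 ≠ 0)
    (hB_ne : ∀ b ∈ B, finrank K V ≤ finrank K W → b.2 ≠ 0)
    (hB_smul : ∀ b ∈ B, ∀ c : K, c ≠ 0 → c • b ∈ B)
    (hB : #B < (Fintype.card K - 1) * (Fintype.card W - 1)) :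
    ∃ f : V →ₗ[K] W, IsFullRank f ∧ ∀ b ∈ B, f b.1 ≠ b.2 := by
  set S : Finset (V →ₗ[K] W) := {f | IsFullRank f}
  set bad := {f ∈ S | ∃ b ∈ B, f b.1 = b.2}
  have hS : 0 < #S :=
    card_pos.2 <| exists_isFullRank.imp fun f hf => (mem_filter_univ f).2 hf
  have hcount : (Fintype.card K - 1) * (Fintype.card W - 1) * #bad ≤ #B * #S :=
    calc _ = (Fintype.card W - 1) * ((Fintype.card K - 1) * #bad) := by ring
      _ ≤ (Fintype.card W - 1) * ∑ b ∈ B, #{f ∈ S | f b.1 = b.2} :=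
          Nat.mul_le_mul_left _ (sub_one_mul_card_filter_exists_apply_eq_le S B hB₀ hB_smul)
      _ ≤ ∑ _b ∈ B, #S := by
          rw [mul_sum]
          refine sum_le_sum fun b hb => ?_
          simpa only [S, filter_filter] using
            sub_one_mul_card_isFullRank_apply_eq_le (hB₀ b hb) (hB_ne b hb)
      _ = #B * #S := by rw [sum_const, smul_eq_mul]
  have hbad : #bad < #S := by
    by_contra! h
    have := Nat.mul_le_mul_left ((Fintype.card K - 1) * (Fintype.card W - 1)) h
    have := Nat.mul_lt_mul_of_pos_right hB hS
    omega
  obtain ⟨f, hfS, hf⟩ := exists_mem_notMem_of_card_lt_card hbad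
  simp only [bad, mem_filter, hfS, true_and, not_exists, not_and] at hf
  exact ⟨f, (mem_filter_univ f).1 hfS, hf⟩

end Fibers

end LinearMap

theorem exists_isFullRank_forall_not_hammingNorm {F : Type*} [Field F] [Fintype F]
    [DecidableEq F] {k n : ℕ} (Q : ℕ × ℕ → Prop) [DecidablePred Q]
    (hsum : ∑ p ∈ (range (k + 1) ×ˢ range (n + 1)).filter Q,
        ((k.choose p.1 * n.choose p.2 * (Fintype.card F - 1) ^ (p.1 + p.2) : ℕ) : ℝ) <
      ((Fintype.card F : ℝ) - 1) * ((Fintype.card F : ℝ) ^ n - 1))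
    (hQ₁ : ∀ p, Q p → 1 ≤ p.1) (hQ₂ : ∀ p, Q p → k ≤ n → 1 ≤ p.2) :
    ∃ f : (Fin k → F) →ₗ[F] (Fin n → F), f.IsFullRank ∧
      ∀ x, ¬ Q (hammingNorm x, hammingNorm (f x)) := by
  classical
  let B : Finset ((Fin k → F) × (Fin n → F)) := {b | Q (hammingNorm b.1, hammingNorm b.2)}
  have hB₀ : ∀ b ∈ B, b.1 ≠ 0 := fun b hb =>
    hammingNorm_pos_iff.1 (hQ₁ _ ((mem_filter_univ b).1 hb))
  have hB_ne : ∀ b ∈ B, finrank F (Fin k → F) ≤ finrank F (Fin n → F) → b.2 ≠ 0 := by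
    intro b hb hkn
    rw [finrank_fin_fun, finrank_fin_fun] at hkn
    exact hammingNorm_pos_iff.1 (hQ₂ _ ((mem_filter_univ b).1 hb) hkn)
  have hB_smul : ∀ b ∈ B, ∀ c : F, c ≠ 0 → c • b ∈ B := by
    intro b hb c hc
    have hc : IsSMulRegular F c := IsSMulRegular.of_ne_zero hc
    rw [mem_filter_univ, Prod.smul_fst, Prod.smul_snd, hammingNorm_smul fun _ => hc,
      hammingNorm_smul fun _ => hc]
    exact (mem_filter_univ b).1 hb
  have hB : #B < (Fintype.card F - 1) * (Fintype.card (Fin n → F) - 1) := by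
    have hcount := card_filter_hammingNorm_pair_le (ι := Fin k) (κ := Fin n) (β := F) Q
    simp only [Fintype.card_fin] at hcount
    rw [Fintype.card_fun, Fintype.card_fin, ← Nat.cast_lt (α := ℝ)]
    push_cast [Nat.one_le_pow, Fintype.card_pos, Nat.cast_sub]
    exact (Nat.cast_le.2 hcount).trans_lt (by exact_mod_cast hsum)
  have : Finite ((Fin k → F) →ₗ[F] (Fin n → F)) := Module.finite_of_finite F
  have : Fintype ((Fin k → F) →ₗ[F] (Fin n → F)) := Fintype.ofFinite _
  obtain ⟨f, hf, hfB⟩ := LinearMap.exists_isFullRank_forall_apply_ne B hB₀ hB_ne hB_smul hB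
  exact ⟨f, hf, fun x hx => hfB (x, f x) ((mem_filter_univ _).2 hx) rfl⟩

open Classical in
theorem encoder_entropy_distance_lower_bound_general
    (F : Type*) [Field F] [Fintype F] [DecidableEq F] (q k n : ℕ)
    (hq : Fintype.card F = q) (h : ℝ)
    (hsum :
      (∑ p ∈ (Finset.range (k + 1) ×ˢ Finset.range (n + 1)).filter
          (fun p => 1 ≤ p.1 ∧ (if k ≤ n then 1 else 0) ≤ p.2 ∧
            Real.logb q ((k.choose p.1 * (q - 1) ^ p.1 : ℕ) : ℝ) +
              Real.logb q ((n.choose p.2 * (q - 1) ^ p.2 : ℕ) : ℝ) < h),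
          ((k.choose p.1 * n.choose p.2 * (q - 1) ^ (p.1 + p.2) : ℕ) : ℝ))
        < ((q : ℝ) - 1) * ((q : ℝ) ^ n - (q : ℝ) ^ (min k n - 1))) :
    ∃ f : (Fin k → F) →ₗ[F] (Fin n → F),
      Module.finrank F (LinearMap.range f) = min k n ∧
      ∀ x : Fin k → F, x ≠ 0 →
        h ≤ Real.logb q ((k.choose (hammingNorm x) * (q - 1) ^ hammingNorm x : ℕ) : ℝ) +
          Real.logb q
            ((n.choose (hammingNorm (f x)) * (q - 1) ^ hammingNorm (f x) : ℕ) : ℝ) := by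
  subst hq
  have hq₁ : (1 : ℝ) ≤ Fintype.card F := by exact_mod_cast Fintype.card_pos
  obtain ⟨f, hf, hfQ⟩ := exists_isFullRank_forall_not_hammingNorm _
    (hsum.trans_le (by gcongr; exact one_le_pow₀ hq₁)) (fun p hp => hp.1)
    (fun p hp hkn => by simpa [hkn] using hp.2.1)
  refine ⟨f, by simpa [LinearMap.IsFullRank] using hf, fun x hx => not_lt.1 fun hlt =>
    hfQ x ⟨hammingNorm_pos_iff.2 hx, ?_, hlt⟩⟩
  split_ifs with hkn
  · have hinj := (LinearMap.isFullRank_iff_injective (by simpa using hkn)).1 hf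
    exact (hammingNorm_pos_iff (x := f x)).2 fun hfx => hx (hinj (hfx.trans (map_zero f).symm))
  · exact Nat.zero_le _

open Classical in
/-- lower bound on the largest entropy distance of a linear encoder:
Let `F` be a finite field with `q` elements, `k ≥ 1`, `n ≥ 1`, `k′ = min(k,n)`, and let
`h` be real with `Σ binom(k,i)·binom(n,j)·(q-1)^{i+j} < (q-1)·(q^n − q^{k′−1})`, the sum
over pairs `(i,j)` with `1 ≤ i ≤ k`, `j₀ ≤ j ≤ n` (`j₀ = 1` if `k ≤ n`, else `j₀ = 0`),
and `log_q(binom(k,i)(q-1)^i) + log_q(binom(n,j)(q-1)^j) < h`. Then there exists a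
full-rank linear map `f : F^k → F^n` with `ew_k(x) + ew_n(f(x)) ≥ h` for every
nonzero `x ∈ F^k`. -/
theorem encoder_entropy_distance_lower_bound
    (F : Type*) [Field F] [Fintype F] [DecidableEq F] (q k n : ℕ)
    (hq : Fintype.card F = q) (hk : 1 ≤ k) (hn : 1 ≤ n) (h : ℝ)
    (hsum :
      (∑ p ∈ (Finset.range (k + 1) ×ˢ Finset.range (n + 1)).filter
          (fun p => 1 ≤ p.1 ∧ (if k ≤ n then 1 else 0) ≤ p.2 ∧
            Real.logb q ((k.choose p.1 * (q - 1) ^ p.1 : ℕ) : ℝ) +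
              Real.logb q ((n.choose p.2 * (q - 1) ^ p.2 : ℕ) : ℝ) < h),
          ((k.choose p.1 * n.choose p.2 * (q - 1) ^ (p.1 + p.2) : ℕ) : ℝ))
        < ((q : ℝ) - 1) * ((q : ℝ) ^ n - (q : ℝ) ^ (min k n - 1))) :
    ∃ f : (Fin k → F) →ₗ[F] (Fin n → F),
      Module.finrank F (LinearMap.range f) = min k n ∧
      ∀ x : Fin k → F, x ≠ 0 →
        h ≤ Real.logb q ((k.choose (hammingNorm x) * (q - 1) ^ hammingNorm x : ℕ) : ℝ) +
          Real.logb q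
            ((n.choose (hammingNorm (f x)) * (q - 1) ^ hammingNorm (f x) : ℕ) : ℝ) :=
  encoder_entropy_distance_lower_bound_general F q k n hq h hsum
end
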